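/- arXiv:0710.0768 — 6 statements merged into one kernel-verified Lean document; each statement's English description precedes it below -/
import Mathlib

section
/- Let ψ ∈ ℋ₁ be an eigenvector of the Floquet (monodromy) operator U(T,0), i.e. U(T,0)ψ = λψ for some λ ∈ ℂ (necessarily |λ| = 1). Then the function F_ψ(t) := ‖H(t)U(t,0)ψ‖_{−1} = sup{ |q(t)(U(t,0)ψ, g)| : g ∈ ℋ₁, ‖g‖₁ ≤ 1 } is bounded on ℝ: sup_{t∈ℝ} F_ψ(t) < ∞. -/
/-!
Along the trajectory `φ t = U t 0 ψ` one has `φ (t + T) = λ • φ t` with `|λ| = 1` (or `ψ = 0`), so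
`t ↦ |q t (φ t) g|` is `T`-periodic and it suffices to bound it on `[0, T]`. There assumption (1)
gives `|q t (φ t) g| ≤ C ‖φ t‖₁ ‖g‖₁`, so it remains to bound `‖φ t‖₁` on `[0, T]`.
Realise `ℋ₁` as the graph of `√H(0)` in `ℋ ⊕₂ ℋ`: since `q 0` is closed the graph is closed, hence a
Hilbert space with inner product `⟪u, g⟫ + q 0 u g`. The `ℋ₁`-weak continuity of `φ` makes
`{φ t | t ∈ [0, T]}` weakly bounded in this Hilbert space, hence bounded by Banach–Steinhaus.
-/

open Filter

/-- The form norm `‖u‖₁ = (‖u‖² + q(0)(u,u))^{1/2}` associated with the form family `q`. -/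
noncomputable def formNorm {ℋ : Type*} [NormedAddCommGroup ℋ] [InnerProductSpace ℂ ℋ]
    (q : ℝ → ℋ → ℋ → ℂ) (u : ℋ) : ℝ :=
  Real.sqrt (‖u‖ ^ 2 + (q 0 u u).re)

open Topology
open scoped InnerProductSpace

section GraphEmbedding

variable {𝕜 E : Type*} [RCLike 𝕜] [NormedAddCommGroup E] [InnerProductSpace 𝕜 E]

def linearMapOfSymmetric (D : Submodule 𝕜 E) (hD : Dense (D : Set E)) (S : E → E)
    (hS : ∀ u v, u ∈ D → v ∈ D → ⟪S u, v⟫_𝕜 = ⟪u, S v⟫_𝕜) : D →ₗ[𝕜] E where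
  toFun u := S u
  map_add' u v := hD.eq_of_inner_left 𝕜 fun g hg => by
    rw [hS _ _ (u + v).2 hg, inner_add_left, hS _ _ u.2 hg, hS _ _ v.2 hg, Submodule.coe_add,
      inner_add_left]
  map_smul' c u := hD.eq_of_inner_left 𝕜 fun g hg => by
    rw [hS _ _ (c • u).2 hg, RingHom.id_apply, inner_smul_left, hS _ _ u.2 hg,
      Submodule.coe_smul, inner_smul_left]

def graphEmbedding {D : Submodule 𝕜 E} (f : D →ₗ[𝕜] E) : D →ₗ[𝕜] WithLp 2 (E × E) :=
  (WithLp.linearEquiv 2 𝕜 (E × E)).symm.toLinearMap ∘ₗ D.subtype.prod f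

def IsClosedForm (D : Submodule 𝕜 E) (q₀ : E → E → 𝕜) : Prop :=
  ∀ u : ℕ → E, (∀ n, u n ∈ D) → ∀ L : E, Tendsto u atTop (𝓝 L) →
    (∀ ε > (0 : ℝ), ∃ N, ∀ m ≥ N, ∀ n ≥ N,
      ‖u m - u n‖ ^ 2 + RCLike.re (q₀ (u m - u n) (u m - u n)) < ε) →
    L ∈ D ∧ Tendsto (fun n => RCLike.re (q₀ (u n - L) (u n - L))) atTop (𝓝 0)

variable {D : Submodule 𝕜 E} {f : D →ₗ[𝕜] E} {q₀ : E → E → 𝕜}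

theorem norm_graphEmbedding (hq : ∀ u v : D, ⟪f u, f v⟫_𝕜 = q₀ u v) (u : D) :
    ‖graphEmbedding f u‖ = √(‖(u : E)‖ ^ 2 + RCLike.re (q₀ u u)) := by
  rw [← hq, inner_self_eq_norm_sq, ← Real.sqrt_sq (norm_nonneg (graphEmbedding f u)),
    WithLp.prod_norm_sq_eq_of_L2]
  rfl

theorem isClosed_range_graphEmbedding (hq : ∀ u v : D, ⟪f u, f v⟫_𝕜 = q₀ u v)
    (hclosed : IsClosedForm D q₀) :
    IsClosed (LinearMap.range (graphEmbedding f) : Set (WithLp 2 (E × E))) := by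
  refine isClosed_of_closure_subset fun y hy => ?_
  obtain ⟨x, hx_mem, hx_lim⟩ := mem_closure_iff_seq_limit.1 hy
  choose u hu using hx_mem
  have hfst : Tendsto (fun n => (u n : E)) atTop (𝓝 y.fst) := by
    refine (((WithLp.continuous_fst 2 E E).tendsto y).comp hx_lim).congr fun n => ?_
    rw [Function.comp_apply, ← hu n]
    rfl
  have hcauchy : ∀ ε > (0 : ℝ), ∃ N, ∀ m ≥ N, ∀ n ≥ N,
      ‖(u m : E) - u n‖ ^ 2 + RCLike.re (q₀ (u m - u n) (u m - u n)) < ε := by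
    intro ε hε
    obtain ⟨N, hN⟩ := Metric.cauchySeq_iff.1 hx_lim.cauchySeq (√ε) (Real.sqrt_pos.2 hε)
    refine ⟨N, fun m hm n hn => ?_⟩
    have h := hN m hm n hn
    rwa [dist_eq_norm, ← hu, ← hu, ← map_sub, norm_graphEmbedding hq,
      Real.sqrt_lt_sqrt_iff_of_pos hε] at h
  obtain ⟨hL, hq_lim⟩ := hclosed (fun n => u n) (fun n => (u n).2) _ hfst hcauchy
  have hlim : Tendsto (fun n => graphEmbedding f (u n)) atTop
      (𝓝 (graphEmbedding f ⟨y.fst, hL⟩)) := by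
    rw [tendsto_iff_norm_sub_tendsto_zero]
    have h := (((tendsto_iff_norm_sub_tendsto_zero.1 hfst).pow 2).add hq_lim).sqrt
    simp only [zero_pow two_ne_zero, add_zero, Real.sqrt_zero] at h
    refine h.congr fun n => ?_
    rw [← map_sub, norm_graphEmbedding hq]
    rfl
  exact ⟨⟨y.fst, hL⟩, tendsto_nhds_unique hlim (by simpa [hu] using hx_lim)⟩

end GraphEmbedding

theorem exists_norm_le_of_forall_norm_inner_le {𝕜 F ι : Type*} [RCLike 𝕜] [NormedAddCommGroup F]
    [InnerProductSpace 𝕜 F] [CompleteSpace F] {v : ι → F}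
    (h : ∀ x, ∃ C, ∀ i, ‖⟪v i, x⟫_𝕜‖ ≤ C) : ∃ C, ∀ i, ‖v i‖ ≤ C := by
  obtain ⟨C, hC⟩ := banach_steinhaus (g := fun i => innerSL 𝕜 (v i)) h
  exact ⟨C, fun i => innerSL_apply_norm 𝕜 (v i) ▸ hC i⟩

section FormFamily

variable {ℋ : Type*} [NormedAddCommGroup ℋ] [InnerProductSpace ℂ ℋ] {D1 : Submodule ℂ ℋ}
  {q : ℝ → ℋ → ℋ → ℂ}

theorem formNorm_eq_norm_graphEmbedding (hD : Dense (D1 : Set ℋ)) {S : ℋ → ℋ}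
    (hS : ∀ u v, u ∈ D1 → v ∈ D1 → ⟪S u, S v⟫_ℂ = q 0 u v)
    (hSsym : ∀ u v, u ∈ D1 → v ∈ D1 → ⟪S u, v⟫_ℂ = ⟪u, S v⟫_ℂ) (u : D1) :
    formNorm q u = ‖graphEmbedding (linearMapOfSymmetric D1 hD S hSsym) u‖ :=
  (norm_graphEmbedding (fun u v => hS u v u.2 v.2) u).symm

theorem exists_formNorm_le_of_isCompact [CompleteSpace ℋ] (hD : Dense (D1 : Set ℋ))
    (hclosed : IsClosedForm D1 (q 0)) {S : ℋ → ℋ}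
    (hS : ∀ u v, u ∈ D1 → v ∈ D1 → ⟪S u, S v⟫_ℂ = q 0 u v)
    (hSsym : ∀ u v, u ∈ D1 → v ∈ D1 → ⟪S u, v⟫_ℂ = ⟪u, S v⟫_ℂ) {φ : ℝ → ℋ}
    (hφD : ∀ t, φ t ∈ D1) (hφ : ∀ g ∈ D1, Continuous fun t => ⟪g, φ t⟫_ℂ + q 0 g (φ t))
    {s : Set ℝ} (hs : IsCompact s) : ∃ K, ∀ t ∈ s, formNorm q (φ t) ≤ K := by
  set f := linearMapOfSymmetric D1 hD S hSsym
  have : CompleteSpace (LinearMap.range (graphEmbedding f)) :=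
    (isClosed_range_graphEmbedding (fun u v => hS u v u.2 v.2) hclosed).isComplete.completeSpace_coe
  let v : s → LinearMap.range (graphEmbedding f) := fun t =>
    ⟨graphEmbedding f ⟨φ t, hφD t⟩, LinearMap.mem_range_self _ _⟩
  obtain ⟨K, hK⟩ := exists_norm_le_of_forall_norm_inner_le (𝕜 := ℂ) (v := v) fun x => by
    obtain ⟨_, g, rfl⟩ := x
    obtain ⟨C, hC⟩ := hs.exists_bound_of_continuousOn (hφ g g.2).continuousOn
    refine ⟨C, fun t => ?_⟩
    have h : ⟪v t, ⟨graphEmbedding f g, LinearMap.mem_range_self _ _⟩⟫_ℂ =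
        (starRingEnd ℂ) (⟪(g : ℋ), φ t⟫_ℂ + q 0 g (φ t)) := by
      rw [Submodule.coe_inner, WithLp.prod_inner_apply, map_add, inner_conj_symm,
        ← hS _ _ g.2 (hφD t), inner_conj_symm]
      rfl
    rw [h, RCLike.norm_conj]
    exact hC t t.2
  exact ⟨K, fun t ht =>
    (formNorm_eq_norm_graphEmbedding hD hS hSsym ⟨φ t, hφD t⟩).trans_le (hK ⟨t, ht⟩)⟩

theorem re_eq_norm_sq_of_inner_eq {t : ℝ} {S : ℋ → ℋ}
    (hS : ∀ u v, u ∈ D1 → v ∈ D1 → ⟪S u, S v⟫_ℂ = q t u v) {u : ℋ} (hu : u ∈ D1) :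
    (q t u u).re = ‖S u‖ ^ 2 := by
  rw [← hS u u hu hu, ← inner_self_eq_norm_sq (𝕜 := ℂ)]
  rfl

theorem norm_le_sqrt_mul_formNorm {C t : ℝ} {S₀ S : ℋ → ℋ}
    (hS₀ : ∀ u v, u ∈ D1 → v ∈ D1 → ⟪S₀ u, S₀ v⟫_ℂ = q 0 u v)
    (hS : ∀ u v, u ∈ D1 → v ∈ D1 → ⟪S u, S v⟫_ℂ = q t u v)
    (hle : ∀ u ∈ D1, (q t u u).re ≤ C * ((q 0 u u).re + ‖u‖ ^ 2)) {u : ℋ} (hu : u ∈ D1) :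
    ‖S u‖ ≤ √C * formNorm q u := by
  rw [formNorm, ← Real.sqrt_mul_self (norm_nonneg (S u)), ← Real.sqrt_mul', ← pow_two,
    ← re_eq_norm_sq_of_inner_eq hS hu, add_comm]
  · exact Real.sqrt_le_sqrt (hle u hu)
  · rw [re_eq_norm_sq_of_inner_eq hS₀ hu]
    positivity

theorem norm_le_mul_formNorm_mul_formNorm {C t : ℝ} (hC : 0 ≤ C) {S₀ S : ℋ → ℋ}
    (hS₀ : ∀ u v, u ∈ D1 → v ∈ D1 → ⟪S₀ u, S₀ v⟫_ℂ = q 0 u v)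
    (hS : ∀ u v, u ∈ D1 → v ∈ D1 → ⟪S u, S v⟫_ℂ = q t u v)
    (hle : ∀ u ∈ D1, (q t u u).re ≤ C * ((q 0 u u).re + ‖u‖ ^ 2)) {u v : ℋ} (hu : u ∈ D1)
    (hv : v ∈ D1) : ‖q t u v‖ ≤ C * formNorm q u * formNorm q v :=
  calc ‖q t u v‖ = ‖⟪S u, S v⟫_ℂ‖ := by rw [hS u v hu hv]
    _ ≤ ‖S u‖ * ‖S v‖ := norm_inner_le_norm _ _
    _ ≤ (√C * formNorm q u) * (√C * formNorm q v) :=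
      have hSu := norm_le_sqrt_mul_formNorm hS₀ hS hle hu
      mul_le_mul hSu (norm_le_sqrt_mul_formNorm hS₀ hS hle hv) (norm_nonneg _)
        ((norm_nonneg _).trans hSu)
    _ = C * formNorm q u * formNorm q v := by
      rw [mul_mul_mul_comm, Real.mul_self_sqrt hC, mul_assoc]

end FormFamily

section Floquet

variable {ℋ : Type*} [NormedAddCommGroup ℋ] [InnerProductSpace ℂ ℋ] {T : ℝ}
  {U : ℝ → ℝ → ℋ →L[ℂ] ℋ} {ψ : ℋ} {lam : ℂ}

theorem propagator_add_period_apply (hUck : ∀ t r s : ℝ, (U t r).comp (U r s) = U t s)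
    (hUper : ∀ t s : ℝ, U (t + T) (s + T) = U t s) (heig : U T 0 ψ = lam • ψ) (t : ℝ) :
    U (t + T) 0 ψ = lam • U t 0 ψ := by
  have hshift : U (t + T) T = U t 0 := by simpa using hUper t 0
  rw [← hUck (t + T) T 0, ContinuousLinearMap.comp_apply, heig, map_smul, hshift]

theorem periodic_norm_form_propagator {D1 : Submodule ℂ ℋ} {q : ℝ → ℋ → ℋ → ℂ}
    (hq_smul : ∀ t : ℝ, ∀ c : ℂ, ∀ u v : ℋ, u ∈ D1 → v ∈ D1 →
      q t (c • u) v = (starRingEnd ℂ) c * q t u v)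
    (hq_per : ∀ t : ℝ, ∀ u v : ℋ, q (t + T) u v = q t u v) (hnorm : ‖U T 0 ψ‖ = ‖ψ‖)
    (hUck : ∀ t r s : ℝ, (U t r).comp (U r s) = U t s)
    (hUper : ∀ t s : ℝ, U (t + T) (s + T) = U t s) (hUD1 : ∀ t : ℝ, U t 0 ψ ∈ D1)
    (heig : U T 0 ψ = lam • ψ) :
    Function.Periodic (fun t (g : D1) => ‖q t (U t 0 ψ) g‖) T := by
  intro t
  funext g
  rcases eq_or_ne ψ 0 with rfl | hψ
  · simp only [map_zero, hq_per]
  have hlam : ‖lam‖ = 1 := by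
    rwa [heig, norm_smul, mul_eq_right₀ (norm_ne_zero_iff.2 hψ)] at hnorm
  simp only [hq_per, propagator_add_period_apply hUck hUper heig,
    hq_smul t lam _ g (hUD1 t) g.2, norm_mul, RCLike.norm_conj, hlam, one_mul]

end Floquet

theorem stmt_3_general
    {ℋ : Type*} [NormedAddCommGroup ℋ] [InnerProductSpace ℂ ℋ] [CompleteSpace ℋ]
    (T : ℝ) (hT : 0 < T)
    -- the family of closed densely defined positive forms q(t) with common domain D1 = ℋ₁
    (D1 : Submodule ℂ ℋ) (hD1dense : Dense (D1 : Set ℋ))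
    (q : ℝ → ℋ → ℋ → ℂ)
    (hq_smul : ∀ t : ℝ, ∀ c : ℂ, ∀ u v : ℋ, u ∈ D1 → v ∈ D1 →
      q t (c • u) v = (starRingEnd ℂ) c * q t u v)
    (hq_per : ∀ t : ℝ, ∀ u v : ℋ, q (t + T) u v = q t u v)
    (hq_closed : ∀ t : ℝ, ∀ u : ℕ → ℋ, (∀ n, u n ∈ D1) → ∀ L : ℋ,
      Tendsto u atTop (nhds L) →
      (∀ ε > (0 : ℝ), ∃ N, ∀ m ≥ N, ∀ n ≥ N,
        ‖u m - u n‖ ^ 2 + (q t (u m - u n) (u m - u n)).re < ε) →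
      L ∈ D1 ∧ Tendsto (fun n => (q t (u n - L) (u n - L)).re) atTop (nhds 0))
    -- assumption (1): C⁻¹(H(0)+1) ≤ H(t) ≤ C(H(0)+1), C ≥ 1
    (C : ℝ) (hC : 1 ≤ C)
    (hcomp : ∀ t : ℝ, ∀ u : ℋ, u ∈ D1 →
      C⁻¹ * ((q 0 u u).re + ‖u‖ ^ 2) ≤ (q t u u).re ∧
        (q t u u).re ≤ C * ((q 0 u u).re + ‖u‖ ^ 2))
    -- assumption (2): t ↦ H(t)⁻¹ is norm-differentiable and ‖√H(t)(d/dt H(t)⁻¹)√H(t)‖ ≤ C,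
    -- where R t = H(t)⁻¹, R' its norm derivative and sqH t = √H(t) on D1
    (sqH : ℝ → ℋ → ℋ)
    (hsqH : ∀ t : ℝ, ∀ u v : ℋ, u ∈ D1 → v ∈ D1 →
      (inner ℂ (sqH t u) (sqH t v) : ℂ) = q t u v)
    (hsqHsym : ∀ t : ℝ, ∀ u v : ℋ, u ∈ D1 → v ∈ D1 →
      (inner ℂ (sqH t u) v : ℂ) = inner ℂ u (sqH t v))
    -- the propagator U(t,s) of Theorem II.27 of Simon (quadratic forms)
    (U : ℝ → ℝ → ℋ →L[ℂ] ℋ)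
    (hUnorm : ∀ t s : ℝ, ∀ ψ : ℋ, ‖U t s ψ‖ = ‖ψ‖)
    (hUck : ∀ t r s : ℝ, (U t r).comp (U r s) = U t s)
    (hUper : ∀ t s : ℝ, U (t + T) (s + T) = U t s)
    (hUD1 : ∀ t : ℝ, ∀ ψ ∈ D1, U t 0 ψ ∈ D1)
    -- point 1: ℋ₁-weak continuity of the trajectories
    (hweakcont : ∀ ψ₀ ∈ D1, ∀ g ∈ D1,
      Continuous fun t => (inner ℂ g (U t 0 ψ₀) : ℂ) + q 0 g (U t 0 ψ₀))
    -- ψ ∈ ℋ₁ is an eigenvector of the Floquet operator U(T,0)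
    (ψ : ℋ) (hψ : ψ ∈ D1) (lam : ℂ) (heig : U T 0 ψ = lam • ψ) :
    ∃ M : ℝ, ∀ t : ℝ, ∀ g ∈ D1, formNorm q g ≤ 1 → ‖q t (U t 0 ψ) g‖ ≤ M := by
  have hφD : ∀ t, U t 0 ψ ∈ D1 := fun t => hUD1 t ψ hψ
  obtain ⟨K, hK⟩ := exists_formNorm_le_of_isCompact hD1dense (hq_closed 0) (hsqH 0) (hsqHsym 0)
    hφD (hweakcont ψ hψ) isCompact_Icc
  have hper := periodic_norm_form_propagator hq_smul hq_per (hUnorm T 0 ψ) hUck hUper hφD heig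
  refine ⟨C * K, fun t g hg hgn => ?_⟩
  obtain ⟨s, hs, hts⟩ := hper.exists_mem_Ico₀ hT t
  have hC₀ : 0 ≤ C := zero_le_one.trans hC
  calc ‖q t (U t 0 ψ) g‖ = ‖q s (U s 0 ψ) g‖ := congrFun hts ⟨g, hg⟩
    _ ≤ C * formNorm q (U s 0 ψ) * formNorm q g :=
      norm_le_mul_formNorm_mul_formNorm hC₀ (hsqH 0) (hsqH s) (fun u hu => (hcomp s u hu).2)
        (hφD s) hg
    _ ≤ C * K * 1 := by
      have hKs := hK s (Set.Ico_subset_Icc_self hs)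
      have hK₀ : 0 ≤ K := (Real.sqrt_nonneg _).trans hKs
      gcongr
      exact Real.sqrt_nonneg _
    _ = C * K := mul_one _

/-- if `ψ ∈ ℋ₁` is an eigenvector of the monodromy operator `U(T,0)`, then
`F_ψ(t) = ‖H(t)U(t,0)ψ‖₋₁ = sup{ |q(t)(U(t,0)ψ,g)| : g ∈ ℋ₁, ‖g‖₁ ≤ 1 }` is bounded on ℝ. -/
theorem stmt_3
    {ℋ : Type*} [NormedAddCommGroup ℋ] [InnerProductSpace ℂ ℋ] [CompleteSpace ℋ]
    [SecondCountableTopology ℋ]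
    (T : ℝ) (hT : 0 < T)
    -- the family of closed densely defined positive forms q(t) with common domain D1 = ℋ₁
    (D1 : Submodule ℂ ℋ) (hD1dense : Dense (D1 : Set ℋ))
    (q : ℝ → ℋ → ℋ → ℂ)
    (hq_smul : ∀ t : ℝ, ∀ c : ℂ, ∀ u v : ℋ, u ∈ D1 → v ∈ D1 →
      q t (c • u) v = (starRingEnd ℂ) c * q t u v)
    (hq_add : ∀ t : ℝ, ∀ u u' v : ℋ, u ∈ D1 → u' ∈ D1 → v ∈ D1 →
      q t (u + u') v = q t u v + q t u' v)
    (hq_herm : ∀ t : ℝ, ∀ u v : ℋ, u ∈ D1 → v ∈ D1 → q t u v = (starRingEnd ℂ) (q t v u))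
    (hq_pos : ∀ t : ℝ, ∀ u : ℋ, u ∈ D1 → 0 ≤ (q t u u).re ∧ (q t u u).im = 0)
    (hq_per : ∀ t : ℝ, ∀ u v : ℋ, q (t + T) u v = q t u v)
    (hq_closed : ∀ t : ℝ, ∀ u : ℕ → ℋ, (∀ n, u n ∈ D1) → ∀ L : ℋ,
      Tendsto u atTop (nhds L) →
      (∀ ε > (0 : ℝ), ∃ N, ∀ m ≥ N, ∀ n ≥ N,
        ‖u m - u n‖ ^ 2 + (q t (u m - u n) (u m - u n)).re < ε) →
      L ∈ D1 ∧ Tendsto (fun n => (q t (u n - L) (u n - L)).re) atTop (nhds 0))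
    -- assumption (1): C⁻¹(H(0)+1) ≤ H(t) ≤ C(H(0)+1), C ≥ 1
    (C : ℝ) (hC : 1 ≤ C)
    (hcomp : ∀ t : ℝ, ∀ u : ℋ, u ∈ D1 →
      C⁻¹ * ((q 0 u u).re + ‖u‖ ^ 2) ≤ (q t u u).re ∧
        (q t u u).re ≤ C * ((q 0 u u).re + ‖u‖ ^ 2))
    -- assumption (2): t ↦ H(t)⁻¹ is norm-differentiable and ‖√H(t)(d/dt H(t)⁻¹)√H(t)‖ ≤ C,
    -- where R t = H(t)⁻¹, R' its norm derivative and sqH t = √H(t) on D1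
    (R R' : ℝ → ℋ →L[ℂ] ℋ)
    (hRD1 : ∀ t : ℝ, ∀ v : ℋ, R t v ∈ D1)
    (hRinv : ∀ t : ℝ, ∀ v : ℋ, ∀ u ∈ D1, q t u (R t v) = (inner ℂ u v : ℂ))
    (hR' : ∀ t : ℝ, HasDerivAt R (R' t) t)
    (sqH : ℝ → ℋ → ℋ)
    (hsqH : ∀ t : ℝ, ∀ u v : ℋ, u ∈ D1 → v ∈ D1 →
      (inner ℂ (sqH t u) (sqH t v) : ℂ) = q t u v)
    (hsqHsym : ∀ t : ℝ, ∀ u v : ℋ, u ∈ D1 → v ∈ D1 →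
      (inner ℂ (sqH t u) v : ℂ) = inner ℂ u (sqH t v))
    (hsqHbound : ∀ t : ℝ, ∀ u v : ℋ, u ∈ D1 → v ∈ D1 →
      ‖(inner ℂ (sqH t u) (R' t (sqH t v)) : ℂ)‖ ≤ C * ‖u‖ * ‖v‖)
    -- the propagator U(t,s) of Theorem II.27 of Simon (quadratic forms)
    (U : ℝ → ℝ → ℋ →L[ℂ] ℋ)
    (hUcont : ∀ ψ : ℋ, Continuous fun p : ℝ × ℝ => U p.1 p.2 ψ)
    (hUnorm : ∀ t s : ℝ, ∀ ψ : ℋ, ‖U t s ψ‖ = ‖ψ‖)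
    (hUid : ∀ t : ℝ, U t t = 1)
    (hUck : ∀ t r s : ℝ, (U t r).comp (U r s) = U t s)
    (hUper : ∀ t s : ℝ, U (t + T) (s + T) = U t s)
    (hUD1 : ∀ t : ℝ, ∀ ψ ∈ D1, U t 0 ψ ∈ D1)
    -- point 1: ℋ₁-weak continuity of the trajectories
    (hweakcont : ∀ ψ₀ ∈ D1, ∀ g ∈ D1,
      Continuous fun t => (inner ℂ g (U t 0 ψ₀) : ℂ) + q 0 g (U t 0 ψ₀))
    -- point 2: the weak Schrödinger equation −i d/dt ⟨g, ψ(t)⟩ + q(t)(g, ψ(t)) = 0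
    (hweakSchr : ∀ ψ₀ ∈ D1, ∀ g ∈ D1, ∀ t : ℝ,
      HasDerivAt (fun τ => (inner ℂ g (U τ 0 ψ₀) : ℂ)) (-(Complex.I * q t g (U t 0 ψ₀))) t)
    -- point 3: lim_{t→s} ‖(ψ(t)−ψ(s))/(t−s) + iH(t)ψ(t)‖₋₁ = 0
    (hcond3 : ∀ ψ₀ ∈ D1, ∀ s : ℝ,
      Tendsto (fun t =>
          sSup {r : ℝ | ∃ g ∈ D1, formNorm q g ≤ 1 ∧
            r = ‖((t - s)⁻¹ : ℝ) • ((inner ℂ (U t 0 ψ₀ - U s 0 ψ₀) g : ℂ))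
                  - Complex.I * q t (U t 0 ψ₀) g‖})
        (nhdsWithin s {s}ᶜ) (nhds 0))
    -- ψ ∈ ℋ₁ is an eigenvector of the Floquet operator U(T,0)
    (ψ : ℋ) (hψ : ψ ∈ D1) (lam : ℂ) (heig : U T 0 ψ = lam • ψ) :
    ∃ M : ℝ, ∀ t : ℝ, ∀ g ∈ D1, formNorm q g ≤ 1 → ‖q t (U t 0 ψ) g‖ ≤ M :=
  stmt_3_general T hT D1 hD1dense q hq_smul hq_per hq_closed C hC hcomp sqH hsqH hsqHsym U hUnorm
    hUck hUper hUD1 hweakcont ψ hψ lam heig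
end

section
/- Let X, Y be bounded operators and A, B bounded Hermitian operators on a complex Hilbert space ℋ such that AX − XB = Y. If there exist two disjoint closed intervals of ℝ containing respectively the spectrum of A and the spectrum of B, then ‖X‖ ≤ ‖Y‖ / dist(Spec(A), Spec(B)), where dist(Spec(A), Spec(B)) = inf{ |a − b| : a ∈ Spec(A), b ∈ Spec(B) }. -/
/-!
Suppose first that `Spec B ⊆ [γ, β]` lies below `Spec A ⊆ [α, ∞)`, and shift both operators by
the midpoint `μ` of `[γ, β]`. Then `‖B - μ‖ ≤ ρ := (β - γ) / 2`, while `A - μ` has spectrum in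
`[α - β + ρ, ∞)`, so it is invertible with `‖(A - μ)⁻¹‖ ≤ (α - β + ρ)⁻¹`. Since the equation is
unchanged by the shift, `(A - μ) X = Y + X (B - μ)` gives
`(α - β + ρ) ‖X‖ ≤ ‖Y‖ + ρ ‖X‖`, i.e. `(α - β) ‖X‖ ≤ ‖Y‖`. Taking `α = inf Spec A` and
`β = sup Spec B` makes `α - β` the distance between the spectra. The opposite ordering reduces to
this one by taking adjoints: `B X* - X* A = -Y*`.
-/

open Set

theorem lt_or_lt_of_disjoint_Icc {α : Type*} [LinearOrder α] {a b c d : α} (hab : a ≤ b)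
    (hcd : c ≤ d) (h : Disjoint (Icc a b) (Icc c d)) : b < c ∨ d < a := by
  by_contra! hle
  exact Set.not_disjoint_iff.2 ⟨max a c, mem_Icc.2 ⟨le_max_left _ _, max_le hab hle.1⟩,
    mem_Icc.2 ⟨le_max_right _ _, max_le hle.2 hcd⟩⟩ h

theorem sub_mul_norm_le_norm_of_mul_sub_mul {R : Type*} [NormedRing R] {a b x y : R} {r s : ℝ}
    (h : a * x - x * b = y) (ha : r * ‖x‖ ≤ ‖a * x‖) (hb : ‖b‖ ≤ s) :
    (r - s) * ‖x‖ ≤ ‖y‖ := by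
  have : r * ‖x‖ ≤ ‖y‖ + s * ‖x‖ := calc
    r * ‖x‖ ≤ ‖y + x * b‖ := by rwa [← h, sub_add_cancel]
    _ ≤ ‖y‖ + ‖x‖ * ‖b‖ := (norm_add_le _ _).trans (by gcongr; exact norm_mul_le _ _)
    _ ≤ ‖y‖ + s * ‖x‖ := by rw [mul_comm]; gcongr
  linarith

theorem sInf_abs_sub_eq_sInf_sub_sSup {S T : Set ℝ} (hS : IsCompact S) (hT : IsCompact T)
    (hSne : S.Nonempty) (hTne : T.Nonempty) (hST : ∀ s ∈ S, ∀ t ∈ T, t ≤ s) :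
    sInf {r | ∃ s ∈ S, ∃ t ∈ T, r = |s - t|} = sInf S - sSup T := by
  have hlb : sInf S - sSup T ∈ lowerBounds {r | ∃ s ∈ S, ∃ t ∈ T, r = |s - t|} := by
    rintro - ⟨s, hs, t, ht, rfl⟩
    calc sInf S - sSup T ≤ s - t := by
          gcongr
          exacts [csInf_le hS.bddBelow hs, le_csSup hT.bddAbove ht]
      _ ≤ |s - t| := le_abs_self _
  have hmem : sInf S - sSup T ∈ {r | ∃ s ∈ S, ∃ t ∈ T, r = |s - t|} :=
    ⟨_, hS.sInf_mem hSne, _, hT.sSup_mem hTne,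
      (abs_of_nonneg (sub_nonneg.2 (hST _ (hS.sInf_mem hSne) _ (hT.sSup_mem hTne)))).symm⟩
  exact IsLeast.csInf_eq ⟨hmem, hlb⟩

namespace IsSelfAdjoint

variable {A : Type*} [CStarAlgebra A]

theorem mul_norm_le_norm_mul {a : A} (ha : IsSelfAdjoint a) {m : ℝ} (hm : 0 < m)
    (hspec : ∀ t ∈ spectrum ℝ a, m ≤ t) (z : A) : m * ‖z‖ ≤ ‖a * z‖ := by
  have hpos : ∀ t ∈ spectrum ℝ a, 0 < t := fun t ht => hm.trans_le (hspec t ht)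
  have hinv : cfc (·⁻¹ : ℝ → ℝ) a * a = 1 := by
    conv_lhs => arg 2; rw [← cfc_id' ℝ a]
    rw [← cfc_mul _ _ a (continuousOn_inv₀.mono fun t ht => (hpos t ht).ne'), ← cfc_one ℝ a]
    exact cfc_congr fun t ht => inv_mul_cancel₀ (hpos t ht).ne'
  have hnorm : ‖cfc (·⁻¹ : ℝ → ℝ) a‖ ≤ m⁻¹ := norm_cfc_le (by positivity) fun t ht => by
    rw [Real.norm_eq_abs, abs_inv, abs_of_pos (hpos t ht)]
    exact inv_anti₀ hm (hspec t ht)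
  calc m * ‖z‖ = m * ‖cfc (·⁻¹ : ℝ → ℝ) a * (a * z)‖ := by rw [← mul_assoc, hinv, one_mul]
    _ ≤ m * (m⁻¹ * ‖a * z‖) := by gcongr; exact (norm_mul_le _ _).trans (by gcongr)
    _ = ‖a * z‖ := by field_simp

theorem norm_sub_algebraMap_midpoint_le {b : A} (hb : IsSelfAdjoint b) {c d : ℝ}
    (hcd : c ≤ d) (hspec : spectrum ℝ b ⊆ Icc c d) :
    ‖b - algebraMap ℝ A ((c + d) / 2)‖ ≤ (d - c) / 2 := by
  rw [← cfc_id' ℝ b, ← cfc_const ((c + d) / 2) b, ← cfc_sub ..]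
  refine norm_cfc_le (by linarith) fun t ht => ?_
  obtain ⟨htc, htd⟩ := hspec ht
  rw [Real.norm_eq_abs, abs_le]
  constructor <;> linarith

theorem sub_mul_norm_le_of_spectrum_sep {a b x y : A} (ha : IsSelfAdjoint a)
    (hb : IsSelfAdjoint b) (h : a * x - x * b = y) {α β γ : ℝ}
    (hα : ∀ t ∈ spectrum ℝ a, α ≤ t) (hγβ : γ ≤ β) (hβ : spectrum ℝ b ⊆ Icc γ β)
    (hβα : β < α) : (α - β) * ‖x‖ ≤ ‖y‖ := by
  set μ := (γ + β) / 2 with hμ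
  have hshift : (a - algebraMap ℝ A μ) * x - x * (b - algebraMap ℝ A μ) = y := by
    rw [← h, sub_mul, mul_sub, Algebra.commutes]; abel
  have hspec : ∀ t ∈ spectrum ℝ (a - algebraMap ℝ A μ), α - β + (β - γ) / 2 ≤ t := by
    rw [← spectrum.sub_singleton_eq, sub_singleton]
    rintro - ⟨s, hs, rfl⟩
    linarith [hα s hs, hμ]
  have := sub_mul_norm_le_norm_of_mul_sub_mul hshift
    ((ha.sub (.algebraMap A (.all μ))).mul_norm_le_norm_mul (by linarith) hspec x)
    (hb.norm_sub_algebraMap_midpoint_le hγβ hβ)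
  rwa [add_sub_cancel_right] at this

theorem norm_le_div_sInf_of_mul_sub_mul [Nontrivial A] {a b x y : A} (ha : IsSelfAdjoint a)
    (hb : IsSelfAdjoint b) (h : a * x - x * b = y)
    (hsep : ∀ s ∈ spectrum ℝ a, ∀ t ∈ spectrum ℝ b, t < s) :
    ‖x‖ ≤ ‖y‖ / sInf {r | ∃ s ∈ spectrum ℝ a, ∃ t ∈ spectrum ℝ b, r = |s - t|} := by
  have hane := ContinuousFunctionalCalculus.spectrum_nonempty (R := ℝ) a ha
  have hbne := ContinuousFunctionalCalculus.spectrum_nonempty (R := ℝ) b hb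
  have hac := spectrum.isCompact (𝕜 := ℝ) a
  have hbc := spectrum.isCompact (𝕜 := ℝ) b
  have hgap : sSup (spectrum ℝ b) < sInf (spectrum ℝ a) :=
    hsep _ (hac.sInf_mem hane) _ (hbc.sSup_mem hbne)
  rw [sInf_abs_sub_eq_sInf_sub_sSup hac hbc hane hbne fun s hs t ht => (hsep s hs t ht).le,
    le_div_iff₀ (sub_pos.2 hgap), mul_comm]
  exact ha.sub_mul_norm_le_of_spectrum_sep hb h (fun t ht => csInf_le hac.bddBelow ht)
    (csInf_le_csSup hbne hbc.bddBelow hbc.bddAbove)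
    (fun t ht => ⟨csInf_le hbc.bddBelow ht, le_csSup hbc.bddAbove ht⟩) hgap

end IsSelfAdjoint

/-- Let X, Y be bounded operators and A, B bounded Hermitian operators on a
complex Hilbert space ℋ such that AX − XB = Y. If there exist two disjoint closed intervals
of ℝ containing respectively Spec(A) and Spec(B), then
‖X‖ ≤ ‖Y‖ / dist(Spec(A), Spec(B)). -/
theorem stmt_7 {ℋ : Type*} [NormedAddCommGroup ℋ] [InnerProductSpace ℂ ℋ]
    [CompleteSpace ℋ] [Nontrivial ℋ]
    (A B X Y : ℋ →L[ℂ] ℋ) (hA : IsSelfAdjoint A) (hB : IsSelfAdjoint B)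
    (hEq : A.comp X - X.comp B = Y)
    (hSep : ∃ a b c d : ℝ, spectrum ℝ A ⊆ Set.Icc a b ∧ spectrum ℝ B ⊆ Set.Icc c d ∧
      Disjoint (Set.Icc a b) (Set.Icc c d)) :
    ‖X‖ ≤ ‖Y‖ / sInf {r : ℝ | ∃ a ∈ spectrum ℝ A, ∃ b ∈ spectrum ℝ B, r = |a - b|} := by
  replace hEq : A * X - X * B = Y := hEq
  obtain ⟨a, b, c, d, hSA, hSB, hdisj⟩ := hSep
  obtain ⟨s₀, hs₀⟩ := ContinuousFunctionalCalculus.spectrum_nonempty (R := ℝ) A hA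
  obtain ⟨t₀, ht₀⟩ := ContinuousFunctionalCalculus.spectrum_nonempty (R := ℝ) B hB
  rcases lt_or_lt_of_disjoint_Icc ((hSA hs₀).1.trans (hSA hs₀).2)
    ((hSB ht₀).1.trans (hSB ht₀).2) hdisj with hbc | hda
  · have hEq' : B * star X - star X * A = -star Y := by
      rw [← hEq, star_sub, star_mul, star_mul, hA.star_eq, hB.star_eq, neg_sub]
    have hswap : {r : ℝ | ∃ s ∈ spectrum ℝ B, ∃ t ∈ spectrum ℝ A, r = |s - t|} =
        {r : ℝ | ∃ s ∈ spectrum ℝ A, ∃ t ∈ spectrum ℝ B, r = |s - t|} := by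
      ext r
      constructor <;> rintro ⟨s, hs, t, ht, rfl⟩ <;> exact ⟨t, ht, s, hs, abs_sub_comm _ _⟩
    have := hB.norm_le_div_sInf_of_mul_sub_mul hA hEq'
      fun t ht s hs => (hSA hs).2.trans_lt (hbc.trans_le (hSB ht).1)
    rwa [norm_star, norm_neg, norm_star, hswap] at this
  · exact hA.norm_le_div_sInf_of_mul_sub_mul hB hEq
      fun s hs t ht => (hSB ht).2.trans_lt (hda.trans_le (hSA hs).1)
end

section
/- Assume the Floquet decomposition U(t,0) = U_F(t)e^{−itH_F} is continuously differentiable in the strong sense. Then for all s, t ∈ ℝ and every ψ ∈ Dom(H(0)), U(t,s)ψ ∈ Dom(H(0)), U(t,s)H(s)ψ − H(t)U(t,s)ψ is well defined, and ‖H(t)U(t,s)ψ − U(t,s)H(s)ψ‖ ≤ 2‖S_F‖·‖ψ‖, where ‖S_F‖ = sup_{t∈ℝ} ‖S_F(t)‖; i.e., H(t)U(t,s) − U(t,s)H(s) extends to a bounded operator on ℋ of norm at most 2‖S_F‖. -/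
/-!
Along the diagonal, `a ↦ U(t+a, s+a)ψ` has derivative `-i(H(t)U(t,s) - U(t,s)H(s))ψ` at `a = 0`
by the Schrödinger equation. On the other hand `U(t+a, s+a) U_F(s+a) = U_F(t+a) e^{-i(t-s)H_F}`
with a middle factor independent of `a`, so the product rule for strongly differentiable families
of isometries identifies the same derivative as
`-i U_F(t) (S_F(t) e^{-i(t-s)H_F} - e^{-i(t-s)H_F} S_F(s)) U_F(s)⁻¹ ψ`,
an operator of norm at most `2‖S_F‖`.
-/

open Filter Topology

universe u v w x

section StronglyContinuousFamily

variable {𝕜 : Type u} {𝕜' : Type v} {E : Type w} {F : Type x}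
  [NontriviallyNormedField 𝕜] [NontriviallyNormedField 𝕜']
  [Algebra 𝕜 𝕜'] [NormedAddCommGroup E] [NormedSpace 𝕜 E] [NormedSpace 𝕜' E]
  [IsScalarTower 𝕜 𝕜' E] [NormedAddCommGroup F] [NormedSpace 𝕜 F] [NormedSpace 𝕜' F]
  [IsScalarTower 𝕜 𝕜' F]

lemma tendsto_apply_of_norm_apply_le {ι : Type*} {l : Filter ι} (V : ι → E →L[𝕜'] F) {C : ℝ}
    (hV : ∀ a x, ‖V a x‖ ≤ C * ‖x‖) {g : ι → E} {x : E} {y : F}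
    (hg : Tendsto g l (𝓝 x)) (hVx : Tendsto (fun a => V a x) l (𝓝 y)) :
    Tendsto (fun a => V a (g a)) l (𝓝 y) := by
  have hsmall : Tendsto (fun a => V a (g a - x)) l (𝓝 0) := by
    refine squeeze_zero_norm (fun a => hV a _) ?_
    simpa using (tendsto_iff_norm_sub_tendsto_zero.mp hg).const_mul C
  simpa using hsmall.add hVx

lemma hasDerivAt_clm_apply_sub (V : 𝕜 → E →L[𝕜'] F) {C : ℝ} (hV : ∀ a x, ‖V a x‖ ≤ C * ‖x‖)
    {u : 𝕜 → E} {σ : 𝕜} {u' : E} (hVc : Tendsto (fun a => V a u') (𝓝 σ) (𝓝 (V σ u')))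
    (hu : HasDerivAt u u' σ) :
    HasDerivAt (fun a => V a (u a - u σ)) (V σ u') σ := by
  have hslope : slope (fun a => V a (u a - u σ)) σ = fun a => V a (slope u σ a) := by
    ext a
    simp only [slope_def_module, sub_self, sub_zero, map_sub, ContinuousLinearMap.map_smul_of_tower]
  rw [hasDerivAt_iff_tendsto_slope, hslope]
  exact tendsto_apply_of_norm_apply_le V hV hu.tendsto_slope (hVc.mono_left nhdsWithin_le_nhds)

lemma HasDerivAt.clm_apply_of_norm_apply_le (V : 𝕜 → E →L[𝕜'] F) {C : ℝ}
    (hV : ∀ a x, ‖V a x‖ ≤ C * ‖x‖) {u : 𝕜 → E} {σ : 𝕜} {u' : E} {Vd : F}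
    (hVc : Tendsto (fun a => V a u') (𝓝 σ) (𝓝 (V σ u')))
    (hu : HasDerivAt u u' σ) (hVd : HasDerivAt (fun a => V a (u σ)) Vd σ) :
    HasDerivAt (fun a => V a (u a)) (V σ u' + Vd) σ := by
  convert (hasDerivAt_clm_apply_sub V hV hVc hu).add hVd using 1
  ext a
  simp

end StronglyContinuousFamily

section Propagator

variable {ℋ : Type u} [NormedAddCommGroup ℋ] [NormedSpace ℂ ℋ]

lemma hasDerivAt_propagator_diagonal (U : ℝ → ℝ → ℋ →L[ℂ] ℋ)
    (hUcont : ∀ ψ : ℋ, Continuous fun p : ℝ × ℝ => U p.1 p.2 ψ)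
    (hUnorm : ∀ t s : ℝ, ∀ ψ : ℋ, ‖U t s ψ‖ = ‖ψ‖) (hUid : ∀ t : ℝ, U t t = 1)
    (hUck : ∀ t r s : ℝ, (U t r).comp (U r s) = U t s)
    (D0 : Submodule ℂ ℋ) (Hop : ℝ → ↥D0 →ₗ[ℂ] ℋ)
    (hUdom : ∀ t s : ℝ, ∀ ψ ∈ D0, U t s ψ ∈ D0)
    (hSchr : ∀ (s : ℝ) (ψ : ℋ) (hψ : ψ ∈ D0) (t : ℝ),
      HasDerivAt (fun τ => U τ s ψ)
        ((-Complex.I) • (Hop t ⟨U t s ψ, hUdom t s ψ hψ⟩ : ℋ)) t)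
    (s t : ℝ) {ψ : ℋ} (hψ : ψ ∈ D0) :
    HasDerivAt (fun a => U (t + a) (s + a) ψ)
      ((-Complex.I) • (Hop t ⟨U t s ψ, hUdom t s ψ hψ⟩ - U t s (Hop s ⟨ψ, hψ⟩))) 0 := by
  have hUck' (a b c : ℝ) (x : ℋ) : U a b (U b c x) = U a c x := by rw [← hUck a b c]; rfl
  have hW (a : ℝ) (x : ℋ) : ‖U (t + a) (s + a) x‖ ≤ 1 * ‖x‖ := by rw [hUnorm, one_mul]
  have hWc (y : ℋ) : Tendsto (fun a => U (t + a) (s + a) y) (𝓝 0) (𝓝 (U (t + 0) (s + 0) y)) :=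
    ((hUcont y).comp (by fun_prop : Continuous fun a : ℝ => (t + a, s + a))).tendsto 0
  have hf : HasDerivAt (fun a => U (t + a) s ψ)
      ((-Complex.I) • (Hop t ⟨U t s ψ, hUdom t s ψ hψ⟩ : ℋ)) 0 :=
    .comp_const_add t 0 (by simpa only [add_zero] using hSchr s ψ hψ t)
  have hu : HasDerivAt (fun a => U (s + a) s ψ) ((-Complex.I) • (Hop s ⟨ψ, hψ⟩ : ℋ)) 0 :=
    .comp_const_add s 0 (by simpa only [add_zero, hUid, one_apply_eq_self] using hSchr s ψ hψ s)
  convert hf.sub (hasDerivAt_clm_apply_sub (fun a => U (t + a) (s + a)) hW (hWc _) hu) using 1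
  · ext a
    simp [hUck', hUid]
  · simp [smul_sub]

lemma propagator_apply_floquet (U : ℝ → ℝ → ℋ →L[ℂ] ℋ)
    (hUck : ∀ t r s : ℝ, (U t r).comp (U r s) = U t s) (E : ℝ → ℋ →L[ℂ] ℋ)
    (hEgrp : ∀ t s : ℝ, (E t).comp (E s) = E (t + s)) (s t a : ℝ) (x : ℋ) :
    U (t + a) (s + a) (U (s + a) 0 (E (-(s + a)) x)) =
      U (t + a) 0 (E (-(t + a)) (E (t - s) x)) := by
  rw [← ContinuousLinearMap.comp_apply (U _ _), hUck, ← ContinuousLinearMap.comp_apply (E _), hEgrp]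
  ring_nf

/-- `U_F(t) (S_F(t) e^{-i(t-s)H_F} - e^{-i(t-s)H_F} S_F(s)) U_F(s)⁻¹`, where
`U_F(t) = U(t,0) E(-t)` and `U_F(s)⁻¹ = E(s) U(0,s)`. -/
def floquetCommutator (U : ℝ → ℝ → ℋ →L[ℂ] ℋ) (E SF : ℝ → ℋ →L[ℂ] ℋ) (s t : ℝ) :
    ℋ →L[ℂ] ℋ :=
  (U t 0).comp ((E (-t)).comp
    (((SF t).comp (E (t - s)) - (E (t - s)).comp (SF s)).comp ((E s).comp (U 0 s))))

lemma eq_floquetCommutator_of_hasDerivAt_propagator_diagonal (U : ℝ → ℝ → ℋ →L[ℂ] ℋ)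
    (hUcont : ∀ ψ : ℋ, Continuous fun p : ℝ × ℝ => U p.1 p.2 ψ)
    (hUnorm : ∀ t s : ℝ, ∀ ψ : ℋ, ‖U t s ψ‖ = ‖ψ‖) (hUid : ∀ t : ℝ, U t t = 1)
    (hUck : ∀ t r s : ℝ, (U t r).comp (U r s) = U t s)
    (E : ℝ → ℋ →L[ℂ] ℋ) (hE0 : E 0 = 1) (hEgrp : ∀ t s : ℝ, (E t).comp (E s) = E (t + s))
    (SF : ℝ → ℋ →L[ℂ] ℋ)
    (hUFderiv : ∀ (ψ : ℋ) (t : ℝ),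
      HasDerivAt (fun τ => U τ 0 (E (-τ) ψ)) ((-Complex.I) • (U t 0 (E (-t) (SF t ψ)))) t)
    (s t : ℝ) {ψ d : ℋ} (hd : HasDerivAt (fun a => U (t + a) (s + a) ψ) ((-Complex.I) • d) 0) :
    d = floquetCommutator U E SF s t ψ := by
  have hUck' (a b c : ℝ) (x : ℋ) : U a b (U b c x) = U a c x := by rw [← hUck a b c]; rfl
  have hEgrp' (a b : ℝ) (x : ℋ) : E a (E b x) = E (a + b) x := by rw [← hEgrp a b]; rfl
  set x := E s (U 0 s ψ)
  have hx : U s 0 (E (-s) x) = ψ := by simp [x, hEgrp', hE0, hUck', hUid]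
  have hW (a : ℝ) (y : ℋ) : ‖U (t + a) (s + a) y‖ ≤ 1 * ‖y‖ := by rw [hUnorm, one_mul]
  have hWc (y : ℋ) : Tendsto (fun a => U (t + a) (s + a) y) (𝓝 0) (𝓝 (U (t + 0) (s + 0) y)) :=
    ((hUcont y).comp (by fun_prop : Continuous fun a : ℝ => (t + a, s + a))).tendsto 0
  have hUFs : HasDerivAt (fun a => U (s + a) 0 (E (-(s + a)) x))
      ((-Complex.I) • (U s 0 (E (-s) (SF s x)))) 0 :=
    .comp_const_add s 0 (by simpa only [add_zero] using hUFderiv x s)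
  have hUFt : HasDerivAt (fun a => U (t + a) 0 (E (-(t + a)) (E (t - s) x)))
      ((-Complex.I) • (U t 0 (E (-t) (SF t (E (t - s) x))))) 0 :=
    .comp_const_add t 0 (by simpa only [add_zero] using hUFderiv (E (t - s) x) t)
  have hprod := HasDerivAt.clm_apply_of_norm_apply_le (fun a => U (t + a) (s + a)) hW (hWc _) hUFs
    (by simpa only [add_zero, hx] using hd)
  simp only [propagator_apply_floquet U hUck E hEgrp] at hprod
  rw [map_smul, ← smul_add] at hprod
  have hsum := smul_right_injective ℋ (neg_ne_zero.mpr Complex.I_ne_zero) (hprod.unique hUFt)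
  rw [eq_sub_of_add_eq' hsum]
  simp only [floquetCommutator, x, ContinuousLinearMap.comp_apply, sub_apply,
    map_sub, add_zero, hUck', hEgrp']
  ring_nf

lemma norm_floquetCommutator_le (U : ℝ → ℝ → ℋ →L[ℂ] ℋ)
    (hUnorm : ∀ t s : ℝ, ∀ ψ : ℋ, ‖U t s ψ‖ = ‖ψ‖) (E : ℝ → ℋ →L[ℂ] ℋ)
    (hEnorm : ∀ t : ℝ, ∀ ψ : ℋ, ‖E t ψ‖ = ‖ψ‖) (SF : ℝ → ℋ →L[ℂ] ℋ) {M : ℝ}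
    (hM : ∀ t : ℝ, ‖SF t‖ ≤ M) (s t : ℝ) :
    ‖floquetCommutator U E SF s t‖ ≤ 2 * M := by
  have hM0 : 0 ≤ M := (norm_nonneg _).trans (hM 0)
  refine ContinuousLinearMap.opNorm_le_bound _ (by positivity) fun ψ => ?_
  set y := E s (U 0 s ψ)
  have hy : ‖y‖ = ‖ψ‖ := by rw [hEnorm, hUnorm]
  calc ‖floquetCommutator U E SF s t ψ‖ = ‖SF t (E (t - s) y) - E (t - s) (SF s y)‖ := by
        simp only [floquetCommutator, ContinuousLinearMap.comp_apply, sub_apply, hUnorm, hEnorm, y]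
    _ ≤ ‖SF t (E (t - s) y)‖ + ‖E (t - s) (SF s y)‖ := norm_sub_le _ _
    _ ≤ M * ‖E (t - s) y‖ + M * ‖y‖ := by
        rw [hEnorm (t - s) (SF s y)]
        exact add_le_add ((SF t).le_of_opNorm_le (hM t) _) ((SF s).le_of_opNorm_le (hM s) _)
    _ = 2 * M * ‖ψ‖ := by rw [hEnorm, hy]; ring

end Propagator

theorem stmt_8_general
    {ℋ : Type*} [NormedAddCommGroup ℋ] [InnerProductSpace ℂ ℋ]
    -- the family H(t) of self-adjoint operators with common domain D0
    (D0 : Submodule ℂ ℋ)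
    (Hop : ℝ → ↥D0 →ₗ[ℂ] ℋ)
    -- the propagator U(t,s)
    (U : ℝ → ℝ → ℋ →L[ℂ] ℋ)
    (hUcont : ∀ ψ : ℋ, Continuous fun p : ℝ × ℝ => U p.1 p.2 ψ)
    (hUnorm : ∀ t s : ℝ, ∀ ψ : ℋ, ‖U t s ψ‖ = ‖ψ‖)
    (hUid : ∀ t : ℝ, U t t = 1)
    (hUck : ∀ t r s : ℝ, (U t r).comp (U r s) = U t s)
    (hUdom : ∀ t s : ℝ, ∀ ψ ∈ D0, U t s ψ ∈ D0)
    (hSchr : ∀ (s : ℝ) (ψ : ℋ) (hψ : ψ ∈ D0) (t : ℝ),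
      HasDerivAt (fun τ => U τ s ψ)
        ((-Complex.I) • (Hop t ⟨U t s ψ, hUdom t s ψ hψ⟩ : ℋ)) t)
    -- the self-adjoint operator H_F with domain DF and its unitary group E t = e^{-itH_F}
    (E : ℝ → ℋ →L[ℂ] ℋ)
    (hE0 : E 0 = 1)
    (hEgrp : ∀ t s : ℝ, (E t).comp (E s) = E (t + s))
    (hEnorm : ∀ t : ℝ, ∀ ψ : ℋ, ‖E t ψ‖ = ‖ψ‖)
    -- the Floquet decomposition U(t,0) = U_F(t) e^{-itH_F}, U_F(t) = U(t,0) E(-t), is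
    -- continuously differentiable in the strong sense, with bounded Hermitian S_F(t) and
    -- derivative ∂_t U_F(t)ψ = -i U_F(t) (S_F(t) ψ) for every ψ ∈ ℋ
    (SF : ℝ → ℋ →L[ℂ] ℋ)
    (hUFderiv : ∀ (ψ : ℋ) (t : ℝ),
      HasDerivAt (fun τ => U τ 0 (E (-τ) ψ))
        ((-Complex.I) • (U t 0 (E (-t) (SF t ψ)))) t)
 :
    ∀ M : ℝ, (∀ t : ℝ, ‖SF t‖ ≤ M) → ∀ s t : ℝ,
      (∀ ψ ∈ D0, U t s ψ ∈ D0) ∧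
      ∃ Z : ℋ →L[ℂ] ℋ, ‖Z‖ ≤ 2 * M ∧
        ∀ (ψ : ℋ) (hψ : ψ ∈ D0) (h : U t s ψ ∈ D0),
          Z ψ = Hop t ⟨U t s ψ, h⟩ - U t s (Hop s ⟨ψ, hψ⟩) := by
  intro M hM s t
  refine ⟨hUdom t s, floquetCommutator U E SF s t,
    norm_floquetCommutator_le U hUnorm E hEnorm SF hM s t, fun ψ hψ _ => ?_⟩
  have hdiag := hasDerivAt_propagator_diagonal U hUcont hUnorm hUid hUck D0 Hop hUdom hSchr s t hψ
  exact (eq_floquetCommutator_of_hasDerivAt_propagator_diagonal U hUcont hUnorm hUid hUck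
    E hE0 hEgrp SF hUFderiv s t hdiag).symm

/-- if the Floquet decomposition is continuously differentiable in the strong
sense then, for all `s, t` and every `ψ ∈ Dom H(0)`, `U(t,s)ψ ∈ Dom H(0)` and
`‖H(t)U(t,s)ψ − U(t,s)H(s)ψ‖ ≤ 2‖S_F‖‖ψ‖`, where `M` is any bound with
`‖S_F(t)‖ ≤ M` for all `t` (so that `sup_t ‖S_F(t)‖ ≤ M`); i.e. `H(t)U(t,s) − U(t,s)H(s)`
extends to a bounded operator on ℋ of norm at most `2‖S_F‖`. -/
theorem stmt_8
    {ℋ : Type*} [NormedAddCommGroup ℋ] [InnerProductSpace ℂ ℋ] [CompleteSpace ℋ]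
    [SecondCountableTopology ℋ]
    (T : ℝ) (hT : 0 < T)
    -- the family H(t) of self-adjoint operators with common domain D0
    (D0 : Submodule ℂ ℋ) (hD0dense : Dense (D0 : Set ℋ))
    (Hop : ℝ → ↥D0 →ₗ[ℂ] ℋ)
    (hHsym : ∀ t : ℝ, ∀ u v : ↥D0, (inner ℂ (Hop t u) (v : ℋ) : ℂ) = inner ℂ (u : ℋ) (Hop t v))
    (hHmax : ∀ t : ℝ, ∀ v w : ℋ,
      (∀ u : ↥D0, (inner ℂ (Hop t u) v : ℂ) = inner ℂ (u : ℋ) w) → v ∈ D0)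
    (hHper : ∀ t : ℝ, Hop (t + T) = Hop t)
    -- the propagator U(t,s)
    (U : ℝ → ℝ → ℋ →L[ℂ] ℋ)
    (hUcont : ∀ ψ : ℋ, Continuous fun p : ℝ × ℝ => U p.1 p.2 ψ)
    (hUnorm : ∀ t s : ℝ, ∀ ψ : ℋ, ‖U t s ψ‖ = ‖ψ‖)
    (hUid : ∀ t : ℝ, U t t = 1)
    (hUck : ∀ t r s : ℝ, (U t r).comp (U r s) = U t s)
    (hUper : ∀ t s : ℝ, U (t + T) (s + T) = U t s)
    (hUdom : ∀ t s : ℝ, ∀ ψ ∈ D0, U t s ψ ∈ D0)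
    (hSchr : ∀ (s : ℝ) (ψ : ℋ) (hψ : ψ ∈ D0) (t : ℝ),
      HasDerivAt (fun τ => U τ s ψ)
        ((-Complex.I) • (Hop t ⟨U t s ψ, hUdom t s ψ hψ⟩ : ℋ)) t)
    -- the self-adjoint operator H_F with domain DF and its unitary group E t = e^{-itH_F}
    (DF : Submodule ℂ ℋ) (hDFdense : Dense (DF : Set ℋ))
    (HF : ↥DF →ₗ[ℂ] ℋ)
    (hHFsym : ∀ u v : ↥DF, (inner ℂ (HF u) (v : ℋ) : ℂ) = inner ℂ (u : ℋ) (HF v))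
    (hHFmax : ∀ v w : ℋ, (∀ u : ↥DF, (inner ℂ (HF u) v : ℂ) = inner ℂ (u : ℋ) w) → v ∈ DF)
    (E : ℝ → ℋ →L[ℂ] ℋ)
    (hE0 : E 0 = 1)
    (hEgrp : ∀ t s : ℝ, (E t).comp (E s) = E (t + s))
    (hEnorm : ∀ t : ℝ, ∀ ψ : ℋ, ‖E t ψ‖ = ‖ψ‖)
    (hEcont : ∀ ψ : ℋ, Continuous fun t => E t ψ)
    (hEdom : ∀ t : ℝ, ∀ ψ ∈ DF, E t ψ ∈ DF)
    (hEderiv : ∀ (ψ : ℋ) (hψ : ψ ∈ DF) (t : ℝ),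
      HasDerivAt (fun τ => E τ ψ) ((-Complex.I) • (HF ⟨E t ψ, hEdom t ψ hψ⟩ : ℋ)) t)
    (hMonodromy : U T 0 = E T)
    -- the Floquet decomposition U(t,0) = U_F(t) e^{-itH_F}, U_F(t) = U(t,0) E(-t), is
    -- continuously differentiable in the strong sense, with bounded Hermitian S_F(t) and
    -- derivative ∂_t U_F(t)ψ = -i U_F(t) (S_F(t) ψ) for every ψ ∈ ℋ
    (SF : ℝ → ℋ →L[ℂ] ℋ)
    (hSFsa : ∀ t : ℝ, IsSelfAdjoint (SF t))
    (hUFderiv : ∀ (ψ : ℋ) (t : ℝ),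
      HasDerivAt (fun τ => U τ 0 (E (-τ) ψ))
        ((-Complex.I) • (U t 0 (E (-t) (SF t ψ)))) t)
    (hSFcont : ∀ ψ : ℋ, Continuous fun t => U t 0 (E (-t) (SF t ψ)))
 :
    ∀ M : ℝ, (∀ t : ℝ, ‖SF t‖ ≤ M) → ∀ s t : ℝ,
      (∀ ψ ∈ D0, U t s ψ ∈ D0) ∧
      ∃ Z : ℋ →L[ℂ] ℋ, ‖Z‖ ≤ 2 * M ∧
        ∀ (ψ : ℋ) (hψ : ψ ∈ D0) (h : U t s ψ ∈ D0),
          Z ψ = Hop t ⟨U t s ψ, h⟩ - U t s (Hop s ⟨ψ, hψ⟩) :=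
  stmt_8_general D0 Hop U hUcont hUnorm hUid hUck hUdom hSchr E hE0 hEgrp hEnorm SF hUFderiv
end

section
/- Assume the Floquet decomposition U(t,0) = U_F(t)e^{−itH_F} is continuously differentiable in the strong sense. Let E_n(t) be an eigenvalue of H(t) and E_m(s) an eigenvalue of H(s) with E_n(t) ≠ E_m(s), and let P_n(t) and P_m(s) denote the orthogonal projections onto the corresponding eigenspaces ker(H(t) − E_n(t)) and ker(H(s) − E_m(s)). Then ‖P_n(t)U(t,s)P_m(s)‖ ≤ 2‖S_F‖ / |E_n(t) − E_m(s)|, where ‖S_F‖ = sup_{t∈ℝ}‖S_F(t)‖. -/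
/-!
If `H(r) φ = E_r φ`, then `χ = U(0,r) φ` is an approximate eigenvector of `H_F`: differentiating
`⟪U_F(τ) e^{-irH_F} u, U(τ,r) φ⟫ = ⟪e^{-i(r-τ)H_F} u, χ⟫` at `τ = r` shows that `χ ∈ Dom H_F` and
`H_F χ = E_r χ - e^{irH_F} S_F(r) e^{-irH_F} χ`, with an error term of norm at most `‖S_F‖ ‖χ‖`.
Since `U` is unitary, `⟪φ, U(t,s) ψ⟫ = ⟪U(0,t) φ, U(0,s) ψ⟫`, and the symmetry of `H_F` applied
to two such approximate eigenvectors bounds `|E_n - E_m| |⟪φ, U(t,s) ψ⟫|` by `2 ‖S_F‖ ‖φ‖ ‖ψ‖`.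
-/

open scoped InnerProductSpace

section InnerProduct

variable {ℋ : Type*} [NormedAddCommGroup ℋ] [InnerProductSpace ℂ ℋ]

theorem inner_map_left_eq_of_norm_map_of_comp_eq_one {A B : ℋ →L[ℂ] ℋ} (hA : ∀ x, ‖A x‖ = ‖x‖)
    (hAB : A ∘L B = 1) (x y : ℋ) : ⟪A x, y⟫_ℂ = ⟪x, B y⟫_ℂ := by
  have hy : A (B y) = y := by simpa using DFunLike.congr_fun hAB y
  conv_lhs => rw [← hy]
  exact (LinearMap.norm_map_iff_inner_map_map A).1 hA x (B y)

theorem exists_mem_apply_eq_of_forall_inner_eq {D : Submodule ℂ ℋ} (hD : Dense (D : Set ℋ))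
    {H : D →ₗ[ℂ] ℋ} (hsym : ∀ u v : D, ⟪H u, v⟫_ℂ = ⟪(u : ℋ), H v⟫_ℂ)
    (hmax : ∀ v w : ℋ, (∀ u : D, ⟪H u, v⟫_ℂ = ⟪(u : ℋ), w⟫_ℂ) → v ∈ D)
    {v w : ℋ} (h : ∀ u : D, ⟪H u, v⟫_ℂ = ⟪(u : ℋ), w⟫_ℂ) : ∃ hv : v ∈ D, H ⟨v, hv⟩ = w := by
  have hv := hmax v w h
  refine ⟨hv, Dense.eq_of_inner_right ℂ hD fun u hu => ?_⟩
  rw [← hsym ⟨u, hu⟩ ⟨v, hv⟩, h ⟨u, hu⟩]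

theorem abs_sub_mul_norm_inner_le {D : Submodule ℂ ℋ} {H : D →ₗ[ℂ] ℋ}
    (hsym : ∀ u v : D, ⟪H u, v⟫_ℂ = ⟪(u : ℋ), H v⟫_ℂ) {a b : ℝ} {χ χ' : D} {B B' : ℋ}
    (hχ : H χ = (a : ℂ) • (χ : ℋ) - B) (hχ' : H χ' = (b : ℂ) • (χ' : ℋ) - B') :
    |a - b| * ‖⟪(χ : ℋ), χ'⟫_ℂ‖ ≤ ‖B‖ * ‖(χ' : ℋ)‖ + ‖(χ : ℋ)‖ * ‖B'‖ := by
  have h := hsym χ χ'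
  rw [hχ, hχ'] at h
  simp only [inner_sub_left, inner_sub_right, inner_smul_left, inner_smul_right,
    Complex.conj_ofReal] at h
  calc |a - b| * ‖⟪(χ : ℋ), χ'⟫_ℂ‖ = ‖((a : ℂ) - b) * ⟪(χ : ℋ), χ'⟫_ℂ‖ := by
        rw [norm_mul, ← Complex.ofReal_sub, Complex.norm_real, Real.norm_eq_abs]
    _ = ‖⟪B, χ'⟫_ℂ - ⟪(χ : ℋ), B'⟫_ℂ‖ := by congr 1; linear_combination h
    _ ≤ ‖⟪B, χ'⟫_ℂ‖ + ‖⟪(χ : ℋ), B'⟫_ℂ‖ := norm_sub_le _ _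
    _ ≤ ‖B‖ * ‖(χ' : ℋ)‖ + ‖(χ : ℋ)‖ * ‖B'‖ :=
        add_le_add (norm_inner_le_norm _ _) (norm_inner_le_norm _ _)

theorem opNorm_comp_comp_le_of_norm_inner_le [CompleteSpace ℋ] {P Q : ℋ →L[ℂ] ℋ}
    (hP : IsStarProjection P) (hQ : IsStarProjection Q) (A : ℋ →L[ℂ] ℋ) {C : ℝ} (hC : 0 ≤ C)
    (h : ∀ φ ψ, P φ = φ → Q ψ = ψ → ‖⟪φ, A ψ⟫_ℂ‖ ≤ C * ‖φ‖ * ‖ψ‖) :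
    ‖P ∘L A ∘L Q‖ ≤ C := by
  refine ContinuousLinearMap.opNorm_le_bound _ hC fun y => ?_
  have hPP : ∀ x, P (P x) = P x := fun x => congr($(hP.isIdempotentElem.eq) x)
  have hQQ : ∀ x, Q (Q x) = Q x := fun x => congr($(hQ.isIdempotentElem.eq) x)
  have hsym : ∀ x y, ⟪P x, y⟫_ℂ = ⟪x, P y⟫_ℂ := hP.isSelfAdjoint.isSymmetric
  set w := A (Q y)
  have hww : ‖P w‖ * ‖P w‖ = ‖⟪P w, w⟫_ℂ‖ := by
    rw [show ⟪P w, w⟫_ℂ = ⟪P w, P w⟫_ℂ by rw [← hsym, hPP], ← inner_self_re_eq_norm,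
      inner_self_eq_norm_mul_norm]
  have hQy : ‖Q y‖ ≤ ‖y‖ :=
    (Q.le_opNorm y).trans (mul_le_of_le_one_left (norm_nonneg y) hQ.norm_le)
  change ‖P w‖ ≤ C * ‖y‖
  rcases (norm_nonneg (P w)).eq_or_lt with hw | hw
  · rw [← hw]; positivity
  refine le_of_mul_le_mul_left ?_ hw
  calc ‖P w‖ * ‖P w‖ = ‖⟪P w, w⟫_ℂ‖ := hww
    _ ≤ C * ‖P w‖ * ‖Q y‖ := h _ _ (hPP w) (hQQ y)
    _ ≤ C * ‖P w‖ * ‖y‖ := by gcongr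
    _ = ‖P w‖ * (C * ‖y‖) := by ring

end InnerProduct

section Floquet

variable {ℋ : Type*} [NormedAddCommGroup ℋ] [InnerProductSpace ℂ ℋ]
  {D0 DF : Submodule ℂ ℋ} {Hop : ℝ → D0 →ₗ[ℂ] ℋ} {HF : DF →ₗ[ℂ] ℋ}
  {U : ℝ → ℝ → ℋ →L[ℂ] ℋ} {E SF : ℝ → ℋ →L[ℂ] ℋ}

theorem hasDerivAt_apply_const_sub (hE0 : E 0 = 1) (hEdom : ∀ t : ℝ, ∀ ψ ∈ DF, E t ψ ∈ DF)
    (hEderiv : ∀ (ψ : ℋ) (hψ : ψ ∈ DF) (t : ℝ),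
      HasDerivAt (fun τ => E τ ψ) ((-Complex.I) • (HF ⟨E t ψ, hEdom t ψ hψ⟩ : ℋ)) t)
    (u : DF) (r : ℝ) :
    HasDerivAt (fun τ => E (r - τ) u) (Complex.I • (HF u : ℋ)) r := by
  have hE0u : (⟨E 0 u, hEdom 0 u u.2⟩ : DF) = u := Subtype.ext (by simp [hE0])
  have h := (hEderiv u u.2 0).scomp_of_eq r ((hasDerivAt_id r).const_sub r) (by simp)
  rw [hE0u] at h
  simpa [Function.comp_def] using h

theorem inner_floquetHamiltonian_apply_propagator_eigenvector [CompleteSpace ℋ]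
    (hUnorm : ∀ t s : ℝ, ∀ ψ : ℋ, ‖U t s ψ‖ = ‖ψ‖)
    (hUid : ∀ t : ℝ, U t t = 1)
    (hUck : ∀ t r s : ℝ, (U t r).comp (U r s) = U t s)
    (hUdom : ∀ t s : ℝ, ∀ ψ ∈ D0, U t s ψ ∈ D0)
    (hSchr : ∀ (s : ℝ) (ψ : ℋ) (hψ : ψ ∈ D0) (t : ℝ),
      HasDerivAt (fun τ => U τ s ψ)
        ((-Complex.I) • (Hop t ⟨U t s ψ, hUdom t s ψ hψ⟩ : ℋ)) t)
    (hE0 : E 0 = 1)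
    (hEgrp : ∀ t s : ℝ, (E t).comp (E s) = E (t + s))
    (hEnorm : ∀ t : ℝ, ∀ ψ : ℋ, ‖E t ψ‖ = ‖ψ‖)
    (hEdom : ∀ t : ℝ, ∀ ψ ∈ DF, E t ψ ∈ DF)
    (hEderiv : ∀ (ψ : ℋ) (hψ : ψ ∈ DF) (t : ℝ),
      HasDerivAt (fun τ => E τ ψ) ((-Complex.I) • (HF ⟨E t ψ, hEdom t ψ hψ⟩ : ℋ)) t)
    (hSFsa : ∀ t : ℝ, IsSelfAdjoint (SF t))
    (hUFderiv : ∀ (ψ : ℋ) (t : ℝ),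
      HasDerivAt (fun τ => U τ 0 (E (-τ) ψ))
        ((-Complex.I) • (U t 0 (E (-t) (SF t ψ)))) t)
    {r Er : ℝ} {φ : ℋ} (hφ : φ ∈ D0) (heig : (Hop r ⟨φ, hφ⟩ : ℋ) = (Er : ℂ) • φ) (u : DF) :
    ⟪HF u, U 0 r φ⟫_ℂ = ⟪(u : ℋ), (Er : ℂ) • U 0 r φ - E (-r) (SF r (E r (U 0 r φ)))⟫_ℂ := by
  have hUadj : ∀ a b x y, ⟪U a b x, y⟫_ℂ = ⟪x, U b a y⟫_ℂ := fun a b =>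
    inner_map_left_eq_of_norm_map_of_comp_eq_one (hUnorm a b) (by rw [hUck, hUid])
  have hEadj : ∀ a x y, ⟪E a x, y⟫_ℂ = ⟪x, E (-a) y⟫_ℂ := fun a =>
    inner_map_left_eq_of_norm_map_of_comp_eq_one (hEnorm a) (by rw [hEgrp, add_neg_cancel, hE0])
  have hUrr : U r r φ = φ := by rw [hUid]; rfl
  have hEE : E (-r) (E r u) = u := by
    rw [← ContinuousLinearMap.comp_apply, hEgrp, neg_add_cancel, hE0]; rfl
  have hfun : (fun τ => ⟪U τ 0 (E (-τ) (E r u)), U τ r φ⟫_ℂ)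
      = fun τ => ⟪E (r - τ) u, U 0 r φ⟫_ℂ := by
    funext τ
    rw [← hUck τ 0 r, ContinuousLinearMap.comp_apply,
      (LinearMap.norm_map_iff_inner_map_map (U τ 0)).1 (hUnorm τ 0),
      ← ContinuousLinearMap.comp_apply, hEgrp, neg_add_eq_sub]
  have hprod := (hUFderiv (E r u) r).inner ℂ (hSchr r φ hφ r)
  rw [hfun] at hprod
  have hgroup := (hasDerivAt_apply_const_sub hE0 hEdom hEderiv u r).inner ℂ
    (hasDerivAt_const r (U 0 r φ))
  have heq := hprod.unique hgroup
  have hSFsym : ∀ x y, ⟪SF r x, y⟫_ℂ = ⟪x, SF r y⟫_ℂ := (hSFsa r).isSymmetric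
  simp only [hUrr, heig, hEE, inner_smul_right, inner_smul_left, inner_zero_right, zero_add,
    map_neg, Complex.conj_I, neg_neg] at heq
  rw [hUadj, hUadj, hEadj, neg_neg, hSFsym, hEadj] at heq
  rw [inner_sub_right, inner_smul_right]
  linear_combination (-Complex.I) * heq + (⟪HF u, U 0 r φ⟫_ℂ - Er * ⟪(u : ℋ), U 0 r φ⟫_ℂ
    + ⟪(u : ℋ), E (-r) (SF r (E r (U 0 r φ)))⟫_ℂ) * Complex.I_sq

end Floquet

theorem stmt_9_general
    {ℋ : Type*} [NormedAddCommGroup ℋ] [InnerProductSpace ℂ ℋ] [CompleteSpace ℋ]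
    -- the family H(t) of self-adjoint operators with common domain D0
    (D0 : Submodule ℂ ℋ)
    (Hop : ℝ → ↥D0 →ₗ[ℂ] ℋ)
    -- the propagator U(t,s)
    (U : ℝ → ℝ → ℋ →L[ℂ] ℋ)
    (hUnorm : ∀ t s : ℝ, ∀ ψ : ℋ, ‖U t s ψ‖ = ‖ψ‖)
    (hUid : ∀ t : ℝ, U t t = 1)
    (hUck : ∀ t r s : ℝ, (U t r).comp (U r s) = U t s)
    (hUdom : ∀ t s : ℝ, ∀ ψ ∈ D0, U t s ψ ∈ D0)
    (hSchr : ∀ (s : ℝ) (ψ : ℋ) (hψ : ψ ∈ D0) (t : ℝ),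
      HasDerivAt (fun τ => U τ s ψ)
        ((-Complex.I) • (Hop t ⟨U t s ψ, hUdom t s ψ hψ⟩ : ℋ)) t)
    -- the self-adjoint operator H_F with domain DF and its unitary group E t = e^{-itH_F}
    (DF : Submodule ℂ ℋ) (hDFdense : Dense (DF : Set ℋ))
    (HF : ↥DF →ₗ[ℂ] ℋ)
    (hHFsym : ∀ u v : ↥DF, (inner ℂ (HF u) (v : ℋ) : ℂ) = inner ℂ (u : ℋ) (HF v))
    (hHFmax : ∀ v w : ℋ, (∀ u : ↥DF, (inner ℂ (HF u) v : ℂ) = inner ℂ (u : ℋ) w) → v ∈ DF)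
    (E : ℝ → ℋ →L[ℂ] ℋ)
    (hE0 : E 0 = 1)
    (hEgrp : ∀ t s : ℝ, (E t).comp (E s) = E (t + s))
    (hEnorm : ∀ t : ℝ, ∀ ψ : ℋ, ‖E t ψ‖ = ‖ψ‖)
    (hEdom : ∀ t : ℝ, ∀ ψ ∈ DF, E t ψ ∈ DF)
    (hEderiv : ∀ (ψ : ℋ) (hψ : ψ ∈ DF) (t : ℝ),
      HasDerivAt (fun τ => E τ ψ) ((-Complex.I) • (HF ⟨E t ψ, hEdom t ψ hψ⟩ : ℋ)) t)
    -- the Floquet decomposition U(t,0) = U_F(t) e^{-itH_F}, U_F(t) = U(t,0) E(-t), is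
    -- continuously differentiable in the strong sense, with bounded Hermitian S_F(t) and
    -- derivative ∂_t U_F(t)ψ = -i U_F(t) (S_F(t) ψ) for every ψ ∈ ℋ
    (SF : ℝ → ℋ →L[ℂ] ℋ)
    (hSFsa : ∀ t : ℝ, IsSelfAdjoint (SF t))
    (hUFderiv : ∀ (ψ : ℋ) (t : ℝ),
      HasDerivAt (fun τ => U τ 0 (E (-τ) ψ))
        ((-Complex.I) • (U t 0 (E (-t) (SF t ψ)))) t)
    (t s : ℝ) (En Em : ℝ) (hne : En ≠ Em)
    (P Q : ℋ →L[ℂ] ℋ)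
    (hPsa : IsSelfAdjoint P) (hPidem : P.comp P = P)
    (hQsa : IsSelfAdjoint Q) (hQidem : Q.comp Q = Q)
    (hPrange : ∀ x : ℋ, P x = x ↔ ∃ h : x ∈ D0, (Hop t ⟨x, h⟩ : ℋ) = (En : ℂ) • x)
    (hQrange : ∀ x : ℋ, Q x = x ↔ ∃ h : x ∈ D0, (Hop s ⟨x, h⟩ : ℋ) = (Em : ℂ) • x) :
    ∀ M : ℝ, (∀ u : ℝ, ‖SF u‖ ≤ M) →
      ‖P.comp ((U t s).comp Q)‖ ≤ 2 * M / |En - Em| := by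
  intro M hM
  have hΔ : 0 < |En - Em| := abs_pos.mpr (sub_ne_zero.mpr hne)
  have hfloquet : ∀ {r Er : ℝ} {φ : ℋ} (hφ : φ ∈ D0), (Hop r ⟨φ, hφ⟩ : ℋ) = (Er : ℂ) • φ →
      ∃ hχ : U 0 r φ ∈ DF,
        (HF ⟨U 0 r φ, hχ⟩ : ℋ) = (Er : ℂ) • U 0 r φ - E (-r) (SF r (E r (U 0 r φ))) :=
    fun hφ heig => exists_mem_apply_eq_of_forall_inner_eq hDFdense hHFsym hHFmax
      (inner_floquetHamiltonian_apply_propagator_eigenvector hUnorm hUid hUck hUdom hSchr hE0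
        hEgrp hEnorm hEdom hEderiv hSFsa hUFderiv hφ heig)
  have hB : ∀ r x, ‖E (-r) (SF r (E r x))‖ ≤ M * ‖x‖ := fun r x => by
    rw [hEnorm, ← hEnorm r x]
    exact (SF r).le_of_opNorm_le (hM r) _
  refine opNorm_comp_comp_le_of_norm_inner_le ⟨hPidem, hPsa⟩ ⟨hQidem, hQsa⟩ _
    (div_nonneg (by linarith [norm_nonneg (SF 0), hM 0]) hΔ.le) fun φ ψ hPφ hQψ => ?_
  obtain ⟨hφ, heφ⟩ := (hPrange φ).1 hPφ
  obtain ⟨hψ, heψ⟩ := (hQrange ψ).1 hQψ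
  obtain ⟨hχ, hHFχ⟩ := hfloquet hφ heφ
  obtain ⟨hχ', hHFχ'⟩ := hfloquet hψ heψ
  have hip : ⟪φ, U t s ψ⟫_ℂ = ⟪U 0 t φ, U 0 s ψ⟫_ℂ := by
    rw [← hUck t 0 s, ContinuousLinearMap.comp_apply,
      inner_map_left_eq_of_norm_map_of_comp_eq_one (hUnorm 0 t) (by rw [hUck, hUid])]
  rw [div_mul_eq_mul_div, div_mul_eq_mul_div, le_div_iff₀ hΔ, mul_comm, hip]
  calc |En - Em| * ‖⟪U 0 t φ, U 0 s ψ⟫_ℂ‖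
      ≤ ‖E (-t) (SF t (E t (U 0 t φ)))‖ * ‖U 0 s ψ‖
        + ‖U 0 t φ‖ * ‖E (-s) (SF s (E s (U 0 s ψ)))‖ :=
        abs_sub_mul_norm_inner_le (χ := ⟨_, hχ⟩) (χ' := ⟨_, hχ'⟩) hHFsym hHFχ hHFχ'
    _ ≤ M * ‖U 0 t φ‖ * ‖U 0 s ψ‖ + ‖U 0 t φ‖ * (M * ‖U 0 s ψ‖) := by
        gcongr <;> exact hB _ _
    _ = 2 * M * ‖φ‖ * ‖ψ‖ := by rw [hUnorm, hUnorm]; ring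

/-- if the Floquet decomposition is continuously differentiable in the strong
sense, `E_n(t)` and `E_m(s)` are distinct eigenvalues of `H(t)` resp. `H(s)`, and `P`, `Q`
are the orthogonal projections onto the corresponding eigenspaces, then
`‖P U(t,s) Q‖ ≤ 2‖S_F‖ / |E_n(t) − E_m(s)|`, where `M` is any bound with `‖S_F(u)‖ ≤ M`
for all `u`. -/
theorem stmt_9
    {ℋ : Type*} [NormedAddCommGroup ℋ] [InnerProductSpace ℂ ℋ] [CompleteSpace ℋ]
    [SecondCountableTopology ℋ]
    (T : ℝ) (hT : 0 < T)
    -- the family H(t) of self-adjoint operators with common domain D0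
    (D0 : Submodule ℂ ℋ) (hD0dense : Dense (D0 : Set ℋ))
    (Hop : ℝ → ↥D0 →ₗ[ℂ] ℋ)
    (hHsym : ∀ t : ℝ, ∀ u v : ↥D0, (inner ℂ (Hop t u) (v : ℋ) : ℂ) = inner ℂ (u : ℋ) (Hop t v))
    (hHmax : ∀ t : ℝ, ∀ v w : ℋ,
      (∀ u : ↥D0, (inner ℂ (Hop t u) v : ℂ) = inner ℂ (u : ℋ) w) → v ∈ D0)
    (hHper : ∀ t : ℝ, Hop (t + T) = Hop t)
    -- the propagator U(t,s)
    (U : ℝ → ℝ → ℋ →L[ℂ] ℋ)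
    (hUcont : ∀ ψ : ℋ, Continuous fun p : ℝ × ℝ => U p.1 p.2 ψ)
    (hUnorm : ∀ t s : ℝ, ∀ ψ : ℋ, ‖U t s ψ‖ = ‖ψ‖)
    (hUid : ∀ t : ℝ, U t t = 1)
    (hUck : ∀ t r s : ℝ, (U t r).comp (U r s) = U t s)
    (hUper : ∀ t s : ℝ, U (t + T) (s + T) = U t s)
    (hUdom : ∀ t s : ℝ, ∀ ψ ∈ D0, U t s ψ ∈ D0)
    (hSchr : ∀ (s : ℝ) (ψ : ℋ) (hψ : ψ ∈ D0) (t : ℝ),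
      HasDerivAt (fun τ => U τ s ψ)
        ((-Complex.I) • (Hop t ⟨U t s ψ, hUdom t s ψ hψ⟩ : ℋ)) t)
    -- the self-adjoint operator H_F with domain DF and its unitary group E t = e^{-itH_F}
    (DF : Submodule ℂ ℋ) (hDFdense : Dense (DF : Set ℋ))
    (HF : ↥DF →ₗ[ℂ] ℋ)
    (hHFsym : ∀ u v : ↥DF, (inner ℂ (HF u) (v : ℋ) : ℂ) = inner ℂ (u : ℋ) (HF v))
    (hHFmax : ∀ v w : ℋ, (∀ u : ↥DF, (inner ℂ (HF u) v : ℂ) = inner ℂ (u : ℋ) w) → v ∈ DF)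
    (E : ℝ → ℋ →L[ℂ] ℋ)
    (hE0 : E 0 = 1)
    (hEgrp : ∀ t s : ℝ, (E t).comp (E s) = E (t + s))
    (hEnorm : ∀ t : ℝ, ∀ ψ : ℋ, ‖E t ψ‖ = ‖ψ‖)
    (hEcont : ∀ ψ : ℋ, Continuous fun t => E t ψ)
    (hEdom : ∀ t : ℝ, ∀ ψ ∈ DF, E t ψ ∈ DF)
    (hEderiv : ∀ (ψ : ℋ) (hψ : ψ ∈ DF) (t : ℝ),
      HasDerivAt (fun τ => E τ ψ) ((-Complex.I) • (HF ⟨E t ψ, hEdom t ψ hψ⟩ : ℋ)) t)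
    (hMonodromy : U T 0 = E T)
    -- the Floquet decomposition U(t,0) = U_F(t) e^{-itH_F}, U_F(t) = U(t,0) E(-t), is
    -- continuously differentiable in the strong sense, with bounded Hermitian S_F(t) and
    -- derivative ∂_t U_F(t)ψ = -i U_F(t) (S_F(t) ψ) for every ψ ∈ ℋ
    (SF : ℝ → ℋ →L[ℂ] ℋ)
    (hSFsa : ∀ t : ℝ, IsSelfAdjoint (SF t))
    (hUFderiv : ∀ (ψ : ℋ) (t : ℝ),
      HasDerivAt (fun τ => U τ 0 (E (-τ) ψ))
        ((-Complex.I) • (U t 0 (E (-t) (SF t ψ)))) t)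
    (hSFcont : ∀ ψ : ℋ, Continuous fun t => U t 0 (E (-t) (SF t ψ)))
    (t s : ℝ) (En Em : ℝ) (hne : En ≠ Em)
    (P Q : ℋ →L[ℂ] ℋ)
    (hPsa : IsSelfAdjoint P) (hPidem : P.comp P = P)
    (hQsa : IsSelfAdjoint Q) (hQidem : Q.comp Q = Q)
    (hPrange : ∀ x : ℋ, P x = x ↔ ∃ h : x ∈ D0, (Hop t ⟨x, h⟩ : ℋ) = (En : ℂ) • x)
    (hQrange : ∀ x : ℋ, Q x = x ↔ ∃ h : x ∈ D0, (Hop s ⟨x, h⟩ : ℋ) = (Em : ℂ) • x) :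
    ∀ M : ℝ, (∀ u : ℝ, ‖SF u‖ ≤ M) →
      ‖P.comp ((U t s).comp Q)‖ ≤ 2 * M / |En - Em| :=
  stmt_9_general D0 Hop U hUnorm hUid hUck hUdom hSchr DF hDFdense HF hHFsym hHFmax E hE0 hEgrp
    hEnorm hEdom hEderiv SF hSFsa hUFderiv t s En Em hne P Q hPsa hPidem hQsa hQidem hPrange hQrange
end

section
/- Let A be a self-adjoint operator in ℋ, n ∈ ℤ₊, and X ∈ C_n(A). Then X(Dom(A^k)) ⊆ Dom(A^k) for every k = 0, 1, …, n. -/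
open scoped ComplexOrder
open Classical

variable {ℋ : Type*} [NormedAddCommGroup ℋ] [InnerProductSpace ℂ ℋ] [CompleteSpace ℋ]

/-- The everywhere-defined extension (by `0` outside the domain) of an unbounded operator
`Aop` with domain the submodule `D`. -/
noncomputable def Aext (D : Submodule ℂ ℋ) (Aop : ↥D →ₗ[ℂ] ℋ) (ψ : ℋ) : ℋ :=
  if h : ψ ∈ D then Aop ⟨ψ, h⟩ else 0

/-- `Dom(A^n)`: the set of vectors to which `A` can be applied `n` times. -/
def domPow (D : Submodule ℂ ℋ) (Aop : ↥D →ₗ[ℂ] ℋ) (n : ℕ) : Set ℋ :=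
  {ψ : ℋ | ∀ k, k < n → (Aext D Aop)^[k] ψ ∈ D}

/-- The sesquilinear form `α_n(ξ,η) = Σ_{k=0}^{n} C(n,k)(−1)^k ⟨X A^k ξ, A^{n−k} η⟩`,
defined (meaningfully) on `Dom(A^n)`. -/
noncomputable def commForm (D : Submodule ℂ ℋ) (Aop : ↥D →ₗ[ℂ] ℋ)
    (X : ℋ →L[ℂ] ℋ) (n : ℕ) (ξ η : ℋ) : ℂ :=
  ∑ k ∈ Finset.range (n + 1),
    (n.choose k : ℂ) * (-1) ^ k *
      (inner ℂ (X ((Aext D Aop)^[k] ξ)) ((Aext D Aop)^[n - k] η) : ℂ)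

/-- `ad_A^n X` exists in `B(ℋ)` and equals the bounded operator `Z`: the form `α_n` is
represented by `Z` on `Dom(A^n)`. -/
def AdExistsN (D : Submodule ℂ ℋ) (Aop : ↥D →ₗ[ℂ] ℋ) (n : ℕ) (X Z : ℋ →L[ℂ] ℋ) : Prop :=
  ∀ ξ ∈ domPow D Aop n, ∀ η ∈ domPow D Aop n,
    commForm D Aop X n ξ η = (inner ℂ (Z ξ) η : ℂ)

/-- `X ∈ C_n(A)`: the multiple commutators `ad_A^k X` exist in `B(ℋ)` for `k = 0,…,n`. -/
def InCn (D : Submodule ℂ ℋ) (Aop : ↥D →ₗ[ℂ] ℋ) (n : ℕ) (X : ℋ →L[ℂ] ℋ) : Prop :=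
  ∀ k, k ≤ n → ∃ Z : ℋ →L[ℂ] ℋ, AdExistsN D Aop k X Z

/-- Self-adjointness of the (in general unbounded) operator `Aop` with domain `D`:
it is densely defined, symmetric, and its domain is maximal. -/
def IsSelfAdjointOp (D : Submodule ℂ ℋ) (Aop : ↥D →ₗ[ℂ] ℋ) : Prop :=
  Dense (D : Set ℋ) ∧
    (∀ u v : ↥D, (inner ℂ (Aop u) (v : ℋ) : ℂ) = inner ℂ (u : ℋ) (Aop v)) ∧
    ∀ v w : ℋ, (∀ u : ↥D, (inner ℂ (Aop u) v : ℂ) = inner ℂ (u : ℋ) w) → v ∈ D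


/-!
Induction on `k`. For `ψ ∈ Dom(A^(k+1))` with `Xψ ∈ Dom(A^k)`, the binomial expansion
`A^(k+1) X = Σ_j C(k+1,j) (ad_A^j X) A^(k+1-j)`, read weakly, gives
`⟨A^k Xψ, Aη⟩ = ⟨w, η⟩` for every `η ∈ Dom(A^(k+1))` with an explicit `w`.
Self-adjointness makes `1 + iA : Dom(A) → ℋ` bijective, and it maps `Dom(A^(m+1))` onto
`Dom(A^m)`; hence every `Dom(A^m)` is dense and `Dom(A^(m+1))` is a core for `A`, so the
identity extends to all `η ∈ Dom(A)` and `A^k Xψ ∈ Dom(A*) = Dom(A)`.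
-/

open scoped InnerProductSpace
open Complex Filter Topology

section

variable {E : Type*} [NormedAddCommGroup E] [InnerProductSpace ℂ E]
  {D : Submodule ℂ E} {Aop : ↥D →ₗ[ℂ] E}

lemma Aext_of_mem {ψ : E} (h : ψ ∈ D) : Aext D Aop ψ = Aop ⟨ψ, h⟩ := dif_pos h

lemma mem_domPow_zero (ψ : E) : ψ ∈ domPow D Aop 0 := fun _ h => absurd h (Nat.not_lt_zero _)

lemma domPow_mono {k m : ℕ} (h : k ≤ m) : domPow D Aop m ⊆ domPow D Aop k :=
  fun _ hψ j hj => hψ j (hj.trans_le h)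

lemma mem_domPow_succ {m : ℕ} {ψ : E} :
    ψ ∈ domPow D Aop (m + 1) ↔ ψ ∈ D ∧ Aext D Aop ψ ∈ domPow D Aop m := by
  refine ⟨fun h => ⟨h 0 m.succ_pos, fun k hk => ?_⟩, fun ⟨h0, h⟩ k hk => ?_⟩
  · rw [← Function.iterate_succ_apply]
    exact h (k + 1) (by omega)
  · cases k with
    | zero => exact h0
    | succ k =>
      rw [Function.iterate_succ_apply]
      exact h k (by omega)

lemma mem_domPow_succ' {m : ℕ} {ψ : E} :
    ψ ∈ domPow D Aop (m + 1) ↔ ψ ∈ domPow D Aop m ∧ (Aext D Aop)^[m] ψ ∈ D := by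
  simp only [domPow, Set.mem_ofPred_eq, Nat.lt_succ_iff_lt_or_eq, or_imp, forall_and,
    forall_eq]

lemma iterate_mem_domPow {m r : ℕ} {ψ : E} (hψ : ψ ∈ domPow D Aop (m + r)) :
    (Aext D Aop)^[r] ψ ∈ domPow D Aop m := fun j hj => by
  rw [← Function.iterate_add_apply]
  exact hψ (j + r) (by omega)

lemma IsSelfAdjointOp.inner_Aext (hA : IsSelfAdjointOp D Aop) {ψ φ : E} (hψ : ψ ∈ D)
    (hφ : φ ∈ D) : ⟪Aext D Aop ψ, φ⟫_ℂ = ⟪ψ, Aext D Aop φ⟫_ℂ := by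
  rw [Aext_of_mem hψ, Aext_of_mem hφ]
  exact hA.2.1 ⟨ψ, hψ⟩ ⟨φ, hφ⟩

lemma IsSelfAdjointOp.inner_iterate_Aext (hA : IsSelfAdjointOp D Aop) :
    ∀ {M : ℕ} {x η : E}, x ∈ domPow D Aop M → η ∈ domPow D Aop M →
      ⟪x, (Aext D Aop)^[M] η⟫_ℂ = ⟪(Aext D Aop)^[M] x, η⟫_ℂ
  | 0, _, _, _, _ => rfl
  | M + 1, x, η, hx, hη => by
    obtain ⟨hxD, hAx⟩ := mem_domPow_succ.1 hx
    obtain ⟨hηM, hAη⟩ := mem_domPow_succ'.1 hη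
    rw [Function.iterate_succ_apply', ← hA.inner_Aext hxD hAη,
      hA.inner_iterate_Aext hAx hηM, Function.iterate_succ_apply]

lemma IsSelfAdjointOp.mem_and_Aext_eq (hA : IsSelfAdjointOp D Aop) {v w : E}
    (h : ∀ u : D, ⟪Aop u, v⟫_ℂ = ⟪(u : E), w⟫_ℂ) : v ∈ D ∧ Aext D Aop v = w := by
  have hv : v ∈ D := hA.2.2 v w h
  refine ⟨hv, hA.1.eq_of_inner_right ℂ fun u hu => ?_⟩
  rw [Aext_of_mem hv, ← hA.2.1 ⟨u, hu⟩ ⟨v, hv⟩, h ⟨u, hu⟩]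

lemma commForm_iterate_eq_fwdDiff_iter (X : E →L[ℂ] E) {j M : ℕ} (hj : j ≤ M) (ψ η : E) :
    commForm D Aop X j ((Aext D Aop)^[M - j] ψ) η =
      (fwdDiff 1)^[j] (fun s => ⟪X ((Aext D Aop)^[M - s] ψ), (Aext D Aop)^[s] η⟫_ℂ) 0 := by
  rw [fwdDiff_iter_eq_sum_shift, commForm, ← Finset.sum_range_reflect]
  refine Finset.sum_congr rfl fun k hk => ?_
  have hkj : k ≤ j := Nat.lt_succ_iff.1 (Finset.mem_range.1 hk)
  rw [← Function.iterate_add_apply, Nat.add_sub_cancel, Nat.choose_symm hkj,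
    Nat.sub_sub_self hkj, show j - k + (M - j) = M - k by omega]
  simp [mul_comm]

-- Gregory–Newton formula: the iterated forward differences at `0` of
-- `s ↦ ⟪X A^(M-s) ψ, A^s η⟫` are the forms `α_j`.
lemma inner_iterate_eq_sum_commForm (X : E →L[ℂ] E) (M : ℕ) (ψ η : E) :
    ⟪X ψ, (Aext D Aop)^[M] η⟫_ℂ = ∑ j ∈ Finset.range (M + 1),
      (M.choose j : ℂ) * commForm D Aop X j ((Aext D Aop)^[M - j] ψ) η := by
  have h := shift_eq_sum_fwdDiff_iter 1
    (fun s => ⟪X ((Aext D Aop)^[M - s] ψ), (Aext D Aop)^[s] η⟫_ℂ) M 0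
  simp only [zero_add, smul_eq_mul, mul_one, Nat.sub_self, Function.iterate_zero, id,
    nsmul_eq_mul] at h
  rw [h]
  refine Finset.sum_congr rfl fun j hj => ?_
  rw [commForm_iterate_eq_fwdDiff_iter X (Nat.lt_succ_iff.1 (Finset.mem_range.1 hj))]

lemma inner_iterate_eq_inner_sum_ad (X : E →L[ℂ] E) (M : ℕ) (Z : ℕ → E →L[ℂ] E)
    (hZ : ∀ j ≤ M, AdExistsN D Aop j X (Z j)) {ψ η : E} (hψ : ψ ∈ domPow D Aop M)
    (hη : η ∈ domPow D Aop M) :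
    ⟪X ψ, (Aext D Aop)^[M] η⟫_ℂ =
      ⟪∑ j ∈ Finset.range (M + 1), (M.choose j : ℂ) • Z j ((Aext D Aop)^[M - j] ψ), η⟫_ℂ := by
  rw [inner_iterate_eq_sum_commForm, sum_inner]
  refine Finset.sum_congr rfl fun j hj => ?_
  have hjM : j ≤ M := Nat.lt_succ_iff.1 (Finset.mem_range.1 hj)
  have hψj : (Aext D Aop)^[M - j] ψ ∈ domPow D Aop j :=
    iterate_mem_domPow (by rwa [Nat.add_sub_cancel' hjM])
  rw [hZ j hjM _ hψj η (domPow_mono hjM hη), inner_smul_left, conj_natCast]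

variable (Aop) in
noncomputable def oneAddISmul (ε : ℝ) : D →ₗ[ℂ] E :=
  D.subtype + ((ε : ℂ) * I) • Aop

lemma oneAddISmul_apply (ε : ℝ) (u : D) :
    oneAddISmul Aop ε u = (u : E) + ((ε : ℂ) * I) • Aop u := rfl

lemma exists_oneAddISmul_eq_Aext {ε : ℝ} (hε : ε ≠ 0) {η : D}
    (hη : oneAddISmul Aop ε η ∈ D) :
    ∃ u : D, (u : E) = Aop η ∧ oneAddISmul Aop ε u = Aext D Aop (oneAddISmul Aop ε η) := by
  set c : ℂ := ε * I
  have hc : c ≠ 0 := by simp [c, hε]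
  have hu : ((c⁻¹ • (⟨_, hη⟩ - η) : D) : E) = Aop η := by
    rw [Submodule.coe_smul, Submodule.coe_sub, Submodule.coe_mk, oneAddISmul_apply,
      add_sub_cancel_left, smul_smul, inv_mul_cancel₀ hc, one_smul]
  refine ⟨_, hu, ?_⟩
  rw [oneAddISmul_apply, hu, map_smul, map_sub, smul_smul, mul_inv_cancel₀ hc, one_smul,
    Aext_of_mem hη, add_sub_cancel]

section Symmetric

variable (hsymm : ∀ u v : D, ⟪Aop u, (v : E)⟫_ℂ = ⟪(u : E), Aop v⟫_ℂ)
include hsymm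

lemma re_inner_oneAddISmul_self (ε : ℝ) (u : D) :
    RCLike.re ⟪oneAddISmul Aop ε u, (u : E)⟫_ℂ = ‖(u : E)‖ ^ 2 := by
  have him : (⟪Aop u, (u : E)⟫_ℂ).im = 0 := by
    rw [← Complex.conj_eq_iff_im, inner_conj_symm, hsymm]
  rw [oneAddISmul_apply, inner_add_left, inner_smul_left, map_add, inner_self_eq_norm_sq]
  simp [him]

lemma norm_le_norm_oneAddISmul (ε : ℝ) (u : D) : ‖(u : E)‖ ≤ ‖oneAddISmul Aop ε u‖ := by
  have h := (re_inner_oneAddISmul_self hsymm ε u).symm.trans_le (re_inner_le_norm _ _)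
  nlinarith [norm_nonneg (u : E), norm_nonneg (oneAddISmul Aop ε u)]

lemma oneAddISmul_injective (ε : ℝ) : Function.Injective (oneAddISmul Aop ε) := by
  refine (injective_iff_map_eq_zero _).2 fun u hu => ?_
  have := norm_le_norm_oneAddISmul hsymm ε u
  rw [hu, norm_zero] at this
  exact Subtype.ext (norm_le_zero_iff.1 this)

lemma inner_oneAddISmul_left (ε : ℝ) (a b : D) :
    ⟪oneAddISmul Aop ε a, (b : E)⟫_ℂ = ⟪(a : E), oneAddISmul Aop (-ε) b⟫_ℂ := by
  simp only [oneAddISmul_apply, inner_add_left, inner_add_right, inner_smul_left,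
    inner_smul_right, hsymm]
  simp [mul_comm]

end Symmetric

lemma orthogonal_range_oneAddISmul (hA : IsSelfAdjointOp D Aop) {ε : ℝ} (hε : ε ≠ 0) :
    (LinearMap.range (oneAddISmul Aop ε))ᗮ = ⊥ := by
  set c : ℂ := ε * I
  have hc : c ≠ 0 := by simp [c, hε]
  refine (Submodule.eq_bot_iff _).2 fun z hz => ?_
  have hBz : ∀ u : D, ⟪oneAddISmul Aop ε u, z⟫_ℂ = 0 := fun u =>
    (Submodule.mem_orthogonal _ z).1 hz _ (LinearMap.mem_range_self _ u)
  have hzD : z ∈ D := hA.2.2 z (c⁻¹ • z) fun u => by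
    have h := hBz u
    have hconj : (starRingEnd ℂ) c = -c := by simp [c]
    rw [oneAddISmul_apply, inner_add_left, inner_smul_left, hconj] at h
    rw [inner_smul_right, eq_inv_mul_iff_mul_eq₀ hc]
    linear_combination -h
  have h := re_inner_oneAddISmul_self hA.2.1 ε ⟨z, hzD⟩
  rw [hBz, map_zero, eq_comm, sq_eq_zero_iff, norm_eq_zero] at h
  exact h

variable [CompleteSpace E]

lemma isClosed_range_oneAddISmul (hA : IsSelfAdjointOp D Aop) {ε : ℝ} (hε : ε ≠ 0) :
    IsClosed (LinearMap.range (oneAddISmul Aop ε) : Set E) := by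
  set c : ℂ := ε * I
  have hc : c ≠ 0 := by simp [c, hε]
  refine isClosed_of_closure_subset fun y hy => ?_
  obtain ⟨ys, hys, hlim⟩ := mem_closure_iff_seq_limit.1 hy
  choose us hus using hys
  have hcauchy : CauchySeq fun n => (us n : E) := by
    have hyC := Metric.cauchySeq_iff.1 hlim.cauchySeq
    refine Metric.cauchySeq_iff.2 fun δ hδ => ?_
    obtain ⟨N, hN⟩ := hyC δ hδ
    refine ⟨N, fun m hm n hn => ?_⟩
    have h := hN m hm n hn
    rw [dist_eq_norm, ← hus m, ← hus n, ← map_sub] at h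
    simpa [dist_eq_norm] using (norm_le_norm_oneAddISmul hA.2.1 ε (us m - us n)).trans_lt h
  obtain ⟨v, hv⟩ := cauchySeq_tendsto_of_complete hcauchy
  have hAus : Tendsto (fun n => Aop (us n)) atTop (𝓝 (c⁻¹ • (y - v))) := by
    refine ((hlim.sub hv).const_smul c⁻¹).congr fun n => ?_
    rw [← hus n, oneAddISmul_apply, add_sub_cancel_left, smul_smul, inv_mul_cancel₀ hc,
      one_smul]
  obtain ⟨hvD, hAv⟩ := hA.mem_and_Aext_eq fun u => tendsto_nhds_unique
    (tendsto_const_nhds.inner hv)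
    ((tendsto_const_nhds.inner hAus).congr fun n => (hA.2.1 u (us n)).symm)
  refine ⟨⟨v, hvD⟩, ?_⟩
  rw [oneAddISmul_apply, ← Aext_of_mem hvD, hAv, smul_smul, mul_inv_cancel₀ hc, one_smul,
    add_sub_cancel]

lemma oneAddISmul_surjective (hA : IsSelfAdjointOp D Aop) {ε : ℝ} (hε : ε ≠ 0) :
    Function.Surjective (oneAddISmul Aop ε) := by
  have := (isClosed_range_oneAddISmul hA hε).completeSpace_coe
  rw [← LinearMap.range_eq_top, ← Submodule.orthogonal_eq_bot_iff]
  exact orthogonal_range_oneAddISmul hA hε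

lemma exists_mem_domPow_oneAddISmul_eq (hA : IsSelfAdjointOp D Aop) {ε : ℝ} (hε : ε ≠ 0) :
    ∀ {m : ℕ} {y : E}, y ∈ domPow D Aop m →
      ∃ η : D, (η : E) ∈ domPow D Aop (m + 1) ∧ oneAddISmul Aop ε η = y
  | 0, y, _ =>
    let ⟨η, hη⟩ := oneAddISmul_surjective hA hε y
    ⟨η, mem_domPow_succ.2 ⟨η.2, mem_domPow_zero _⟩, hη⟩
  | m + 1, y, hy => by
    obtain ⟨hyD, hAy⟩ := mem_domPow_succ.1 hy
    obtain ⟨η, rfl⟩ := oneAddISmul_surjective hA hε y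
    obtain ⟨ζ, hζ, hBζ⟩ := exists_mem_domPow_oneAddISmul_eq hA hε hAy
    obtain ⟨u, hu, hBu⟩ := exists_oneAddISmul_eq_Aext hε hyD
    have hζu : ζ = u := oneAddISmul_injective hA.2.1 ε (hBζ.trans hBu.symm)
    refine ⟨η, mem_domPow_succ.2 ⟨η.2, ?_⟩, rfl⟩
    rwa [Aext_of_mem η.2, ← hu, ← hζu]

lemma eq_zero_of_forall_domPow_inner (hA : IsSelfAdjointOp D Aop) :
    ∀ (m : ℕ) {z : E}, (∀ y ∈ domPow D Aop m, ⟪y, z⟫_ℂ = 0) → z = 0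
  | 0, z, h => inner_self_eq_zero.1 (h z (mem_domPow_zero z))
  | m + 1, z, h => by
    obtain ⟨u, rfl⟩ := oneAddISmul_surjective hA (neg_ne_zero.2 one_ne_zero) z
    suffices (u : E) = 0 by rw [Subtype.ext (this.trans D.coe_zero.symm), map_zero]
    refine eq_zero_of_forall_domPow_inner hA m fun y hy => ?_
    obtain ⟨η, hη, rfl⟩ := exists_mem_domPow_oneAddISmul_eq hA one_ne_zero hy
    rw [inner_oneAddISmul_left hA.2.1]
    exact h η hη

theorem mem_of_forall_domPow_inner (hA : IsSelfAdjointOp D Aop) (m : ℕ) {v w : E}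
    (h : ∀ η ∈ domPow D Aop (m + 1), ⟪Aext D Aop η, v⟫_ℂ = ⟪η, w⟫_ℂ) : v ∈ D := by
  -- `v = (1 - iA)⁻¹ (v - i w)`: both have the same inner product with every `(1 + iA) η`,
  -- `η ∈ Dom(A^(m+1))`, and these vectors exhaust `Dom(A^m)`.
  obtain ⟨u, hu⟩ := oneAddISmul_surjective hA (neg_ne_zero.2 one_ne_zero) (v - I • w)
  suffices (u : E) = v from this ▸ u.2
  refine sub_eq_zero.1 (eq_zero_of_forall_domPow_inner hA m fun y hy => ?_)
  obtain ⟨η, hη, rfl⟩ := exists_mem_domPow_oneAddISmul_eq hA one_ne_zero hy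
  rw [inner_sub_right, inner_oneAddISmul_left hA.2.1, hu, oneAddISmul_apply, inner_add_left,
    inner_smul_left, ← Aext_of_mem η.2, h η hη, inner_sub_right, inner_smul_right, ofReal_one,
    one_mul, conj_I]
  ring

end

/-- if `A` is self-adjoint and `X ∈ C_n(A)` then
`X(Dom(A^k)) ⊆ Dom(A^k)` for every `k = 0,1,…,n`. -/
theorem stmt_12 {ℋ : Type*} [NormedAddCommGroup ℋ] [InnerProductSpace ℂ ℋ] [CompleteSpace ℋ]
    (D : Submodule ℂ ℋ) (Aop : ↥D →ₗ[ℂ] ℋ) (hA : IsSelfAdjointOp D Aop)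
    (n : ℕ) (X : ℋ →L[ℂ] ℋ) (hX : InCn D Aop n X) :
    ∀ k, k ≤ n → ∀ ψ ∈ domPow D Aop k, X ψ ∈ domPow D Aop k := by
  choose! Z hZ using hX
  intro k
  induction k with
  | zero => exact fun _ ψ _ => mem_domPow_zero _
  | succ k ih =>
    intro hk ψ hψ
    have hXψ := ih (by omega) ψ (domPow_mono k.le_succ hψ)
    refine mem_domPow_succ'.2 ⟨hXψ, mem_of_forall_domPow_inner hA k
      (w := ∑ j ∈ Finset.range (k + 2), ((k + 1).choose j : ℂ) • Z j ((Aext D Aop)^[k + 1 - j] ψ))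
      fun η hη => ?_⟩
    rw [← inner_conj_symm, ← hA.inner_iterate_Aext hXψ (mem_domPow_succ.1 hη).2,
      ← Function.iterate_succ_apply,
      inner_iterate_eq_inner_sum_ad X (k + 1) Z (fun j hj => hZ j (hj.trans hk)) hψ hη,
      inner_conj_symm]
end

section
/- Let A be a self-adjoint operator in ℋ and n ∈ ℤ₊. Then C_n(A) is a *-subalgebra of B(ℋ): it is a linear subspace, and if X, Y ∈ C_n(A) then X* ∈ C_n(A) and XY ∈ C_n(A). -/
/-!
Linearity and the adjoint are formal identities of the forms `α_k`; for instance
`α_k(X*)(ξ, η) = (-1)^k conj (α_k(X)(η, ξ))`. Products are handled by the Leibniz rule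
`ad^m (XY) = ∑ C(m, j) ad^j X ad^(m-j) Y`, proved by induction on `m` from
`α_(m+1)(ξ, η) = α_m(ξ, A η) - α_m(A ξ, η)`. The induction needs `ad^i Y` to map `Dom(A^(i+1))`
into `Dom(A)` with `A ad^i Y = ad^i Y A + ad^(i+1) Y` there. The form identity gives this
only against vectors of `Dom(A^(i+1))`; it extends to all of `Dom(A)` because `Dom(A^p)` is a core
for `A`: the operators `i(t+1) (A + i(t+1))⁻¹` are contractions converging strongly to `1` and map
`Dom(A^k)` into `Dom(A^(k+1))`. Maximality of the domain of `A` then does the rest.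
-/

open scoped ComplexOrder
open Classical

variable {ℋ : Type*} [NormedAddCommGroup ℋ] [InnerProductSpace ℂ ℋ] [CompleteSpace ℋ]

open Filter Topology
open scoped InnerProductSpace

lemma sum_range_choose_succ_mul {R : Type*} [Semiring R] (g : ℕ → R) (m : ℕ) :
    ∑ j ∈ Finset.range (m + 2), ((m + 1).choose j : R) * g j =
      ∑ j ∈ Finset.range (m + 1), (m.choose j : R) * g j +
        ∑ j ∈ Finset.range (m + 1), (m.choose j : R) * g (j + 1) := by
  have shifted : ∑ j ∈ Finset.range (m + 1), (m.choose (j + 1) : R) * g (j + 1) + g 0 =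
      ∑ j ∈ Finset.range (m + 1), (m.choose j : R) * g j := by
    have := Finset.sum_range_succ' (fun j => (m.choose j : R) * g j) (m + 1)
    simp only [Nat.choose_zero_right, Nat.cast_one, one_mul] at this
    rw [← this, Finset.sum_range_succ, Nat.choose_succ_self, Nat.cast_zero, zero_mul, add_zero]
  rw [Finset.sum_range_succ']
  simp only [Nat.choose_succ_succ', Nat.cast_add, add_mul, Finset.sum_add_distrib,
    Nat.choose_zero_right, Nat.cast_one, one_mul]
  rw [← shifted]
  abel

lemma ext_inner_left_of_dense {𝕜 E : Type*} [RCLike 𝕜] [NormedAddCommGroup E]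
    [InnerProductSpace 𝕜 E] {s : Set E} (hs : Dense s) {a b : E}
    (h : ∀ w ∈ s, ⟪w, a⟫_𝕜 = ⟪w, b⟫_𝕜) : a = b :=
  ext_inner_left 𝕜 fun w => congrFun (Continuous.ext_on hs (by fun_prop) (by fun_prop) h) w

lemma tendsto_iterate_of_lipschitzWith_one {ι X : Type*} [PseudoMetricSpace X] {l : Filter ι}
    {F : ι → X → X} (hF : ∀ i, LipschitzWith 1 (F i))
    (hlim : ∀ x, Tendsto (fun i => F i x) l (𝓝 x)) (p : ℕ) (x : X) :
    Tendsto (fun i => (F i)^[p] x) l (𝓝 x) := by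
  induction p with
  | zero => exact tendsto_const_nhds
  | succ p ih =>
    rw [tendsto_iff_dist_tendsto_zero] at ih ⊢
    have hstep : ∀ i, dist ((F i)^[p + 1] x) x ≤ dist ((F i)^[p] x) x + dist (F i x) x := by
      intro i
      rw [Function.iterate_succ_apply']
      calc dist (F i ((F i)^[p] x)) x
          ≤ dist (F i ((F i)^[p] x)) (F i x) + dist (F i x) x := dist_triangle _ _ _
        _ ≤ dist ((F i)^[p] x) x + dist (F i x) x := by
          gcongr; simpa using (hF i).dist_le_mul ((F i)^[p] x) x
    have hsum := ih.add (tendsto_iff_dist_tendsto_zero.1 (hlim x))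
    rw [add_zero] at hsum
    exact squeeze_zero (fun _ => dist_nonneg) hstep hsum

lemma tendsto_of_dense_of_lipschitzWith {ι X : Type*} [PseudoMetricSpace X] {l : Filter ι}
    {F : ι → X → X} {K : NNReal} (hF : ∀ i, LipschitzWith K (F i)) {s : Set X} (hs : Dense s)
    (hlim : ∀ x ∈ s, Tendsto (fun i => F i x) l (𝓝 x)) (x : X) :
    Tendsto (fun i => F i x) l (𝓝 x) := by
  have hequi := (LipschitzWith.uniformEquicontinuous F K hF).equicontinuous
  exact (hequi.isClosed_setOfPred_tendsto (l := l) continuous_id).closure_subset_iff.2 hlim (hs x)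

section
omit [CompleteSpace ℋ]

variable {D : Submodule ℂ ℋ} {Aop : ↥D →ₗ[ℂ] ℋ}

local notation "A" => Aext D Aop
local notation "dom" => domPow D Aop

lemma Aext_coe (u : D) : A u = Aop u := dif_pos u.2

lemma Aext_add {ψ φ : ℋ} (hψ : ψ ∈ D) (hφ : φ ∈ D) : A (ψ + φ) = A ψ + A φ := by
  lift ψ to D using hψ
  lift φ to D using hφ
  rw [← Submodule.coe_add, Aext_coe, Aext_coe, Aext_coe, map_add]

lemma Aext_sub {ψ φ : ℋ} (hψ : ψ ∈ D) (hφ : φ ∈ D) : A (ψ - φ) = A ψ - A φ := by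
  lift ψ to D using hψ
  lift φ to D using hφ
  rw [← Submodule.coe_sub, Aext_coe, Aext_coe, Aext_coe, map_sub]

lemma Aext_smul (c : ℂ) {ψ : ℋ} (hψ : ψ ∈ D) : A (c • ψ) = c • A ψ := by
  lift ψ to D using hψ
  rw [← Submodule.coe_smul, Aext_coe, Aext_coe, map_smul]

lemma add_I_smul_subtype_apply (r : ℝ) (u : D) :
    (Aop + ((r : ℂ) * Complex.I) • D.subtype) u = A u + ((r : ℂ) * Complex.I) • (u : ℋ) := by
  simp [Aext_coe]

lemma mem_domPow_zero_s14 (ψ : ℋ) : ψ ∈ dom 0 := fun _ h => absurd h (Nat.not_lt_zero _)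

lemma mem_domPow_succ_iff {ψ : ℋ} {k : ℕ} : ψ ∈ dom (k + 1) ↔ ψ ∈ D ∧ A ψ ∈ dom k := by
  simp only [domPow, Set.mem_ofPred_eq, Nat.forall_lt_succ_left, Function.iterate_succ_apply,
    Function.iterate_zero_apply]

lemma Aext_mem_domPow {ψ : ℋ} {k : ℕ} (h : ψ ∈ dom (k + 1)) : A ψ ∈ dom k :=
  (mem_domPow_succ_iff.1 h).2

lemma domPow_antitone : Antitone (domPow D Aop) :=
  fun _ _ hkm _ hψ j hj => hψ j (lt_of_lt_of_le hj hkm)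

lemma add_mem_domPow {ψ φ : ℋ} {k : ℕ} (hψ : ψ ∈ dom k) (hφ : φ ∈ dom k) : ψ + φ ∈ dom k := by
  induction k generalizing ψ φ with
  | zero => exact mem_domPow_zero_s14 _
  | succ k ih =>
    rw [mem_domPow_succ_iff] at hψ hφ ⊢
    rw [Aext_add hψ.1 hφ.1]
    exact ⟨D.add_mem hψ.1 hφ.1, ih hψ.2 hφ.2⟩

lemma smul_mem_domPow (c : ℂ) {ψ : ℋ} {k : ℕ} (hψ : ψ ∈ dom k) : c • ψ ∈ dom k := by
  induction k generalizing ψ with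
  | zero => exact mem_domPow_zero_s14 _
  | succ k ih =>
    rw [mem_domPow_succ_iff] at hψ ⊢
    rw [Aext_smul c hψ.1]
    exact ⟨D.smul_mem c hψ.1, ih hψ.2⟩

variable (D Aop) in
lemma commForm_zero (X : ℋ →L[ℂ] ℋ) (ξ η : ℋ) : commForm D Aop X 0 ξ η = ⟪X ξ, η⟫_ℂ := by
  simp [commForm]

variable (D Aop) in
lemma commForm_add (X Y : ℋ →L[ℂ] ℋ) (k : ℕ) (ξ η : ℋ) :
    commForm D Aop (X + Y) k ξ η = commForm D Aop X k ξ η + commForm D Aop Y k ξ η := by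
  simp only [commForm, ← Finset.sum_add_distrib, add_apply, inner_add_left, mul_add]

variable (D Aop) in
lemma commForm_smul (c : ℂ) (X : ℋ →L[ℂ] ℋ) (k : ℕ) (ξ η : ℋ) :
    commForm D Aop (c • X) k ξ η = (starRingEnd ℂ) c * commForm D Aop X k ξ η := by
  simp only [commForm, Finset.mul_sum, smul_apply, inner_smul_left]
  refine Finset.sum_congr rfl fun _ _ => by ring

variable (D Aop) in
lemma commForm_succ (X : ℋ →L[ℂ] ℋ) (m : ℕ) (ξ η : ℋ) :
    commForm D Aop X (m + 1) ξ η = commForm D Aop X m ξ (A η) - commForm D Aop X m (A ξ) η := by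
  have pascal := sum_range_choose_succ_mul
    (fun k => (-1 : ℂ) ^ k * ⟪X (A^[k] ξ), A^[m + 1 - k] η⟫_ℂ) m
  simp only [← mul_assoc] at pascal
  rw [commForm, pascal, sub_eq_add_neg, commForm, commForm, ← Finset.sum_neg_distrib]
  congr 1 <;> refine Finset.sum_congr rfl fun k hk => ?_
  · rw [← Function.iterate_succ_apply A (m - k) η, Nat.succ_eq_add_one,
      Nat.sub_add_comm (Nat.le_of_lt_succ (Finset.mem_range.1 hk))]
  · rw [Function.iterate_succ_apply, Nat.add_sub_add_right]
    ring

noncomputable def leibnizSum (T S : ℕ → ℋ →L[ℂ] ℋ) (m : ℕ) : ℋ →L[ℂ] ℋ :=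
  ∑ j ∈ Finset.range (m + 1), (m.choose j : ℂ) • (T j).comp (S (m - j))

lemma inner_leibnizSum_apply (T S : ℕ → ℋ →L[ℂ] ℋ) (m : ℕ) (ξ η : ℋ) :
    ⟪leibnizSum T S m ξ, η⟫_ℂ =
      ∑ j ∈ Finset.range (m + 1), (m.choose j : ℂ) * ⟪T j (S (m - j) ξ), η⟫_ℂ := by
  simp only [leibnizSum, sum_apply, sum_inner, smul_apply, inner_smul_left, map_natCast,
    ContinuousLinearMap.comp_apply]

namespace AdExistsN

variable {n : ℕ} {X Y Z W : ℋ →L[ℂ] ℋ}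

lemma add (hZ : AdExistsN D Aop n X Z) (hW : AdExistsN D Aop n Y W) :
    AdExistsN D Aop n (X + Y) (Z + W) := fun ξ hξ η hη => by
  rw [commForm_add, hZ ξ hξ η hη, hW ξ hξ η hη, add_apply, inner_add_left]

lemma smul (c : ℂ) (hZ : AdExistsN D Aop n X Z) : AdExistsN D Aop n (c • X) (c • Z) :=
  fun ξ hξ η hη => by rw [commForm_smul, hZ ξ hξ η hη, smul_apply, inner_smul_left]

lemma eq_of_zero (hZ : AdExistsN D Aop 0 X Z) : Z = X := by
  ext ξ
  refine ext_inner_right ℂ fun η => ?_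
  rw [← hZ ξ (mem_domPow_zero_s14 ξ) η (mem_domPow_zero_s14 η), commForm_zero]

lemma inner_succ {j : ℕ} (hZ : AdExistsN D Aop j X Z) (hW : AdExistsN D Aop (j + 1) X W)
    {v u : ℋ} (hv : v ∈ dom (j + 1)) (hu : u ∈ dom (j + 1)) :
    ⟪W v, u⟫_ℂ = ⟪Z v, A u⟫_ℂ - ⟪Z (A v), u⟫_ℂ := by
  have hjj : j ≤ j + 1 := Nat.le_succ j
  rw [← hW v hv u hu, commForm_succ, hZ v (domPow_antitone hjj hv) (A u) (Aext_mem_domPow hu),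
    hZ (A v) (Aext_mem_domPow hv) u (domPow_antitone hjj hu)]

end AdExistsN

namespace IsSelfAdjointOp

variable (hA : IsSelfAdjointOp D Aop)
include hA

lemma inner_Aext_comm {u v : ℋ} (hu : u ∈ D) (hv : v ∈ D) : ⟪A u, v⟫_ℂ = ⟪u, A v⟫_ℂ := by
  lift u to D using hu
  lift v to D using hv
  rw [Aext_coe, Aext_coe]
  exact hA.2.1 u v

lemma mem_and_Aext_eq_of_inner {v w : ℋ} (h : ∀ u ∈ D, ⟪A u, v⟫_ℂ = ⟪u, w⟫_ℂ) :
    v ∈ D ∧ A v = w := by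
  have hv : v ∈ D := hA.2.2 v w fun u => by rw [← Aext_coe]; exact h u u.2
  refine ⟨hv, ext_inner_left_of_dense (𝕜 := ℂ) hA.1 fun u hu => ?_⟩
  rw [← hA.inner_Aext_comm hu hv, h u hu]

lemma mem_and_Aext_eq_of_tendsto {v : ℕ → ℋ} {u w : ℋ} (hv : ∀ t, v t ∈ D)
    (hu : Tendsto v atTop (𝓝 u)) (hw : Tendsto (fun t => A (v t)) atTop (𝓝 w)) :
    u ∈ D ∧ A u = w := by
  refine hA.mem_and_Aext_eq_of_inner fun x hx => tendsto_nhds_unique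
    (tendsto_const_nhds.inner hu) ?_
  simp_rw [hA.inner_Aext_comm hx (hv _)]
  exact tendsto_const_nhds.inner hw

lemma norm_Aext_add_I_smul_sq (r : ℝ) {u : ℋ} (hu : u ∈ D) :
    ‖A u + ((r : ℂ) * Complex.I) • u‖ ^ 2 = ‖A u‖ ^ 2 + r ^ 2 * ‖u‖ ^ 2 := by
  have hreal : (⟪A u, u⟫_ℂ).im = 0 := by
    rw [← Complex.conj_eq_iff_im, inner_conj_symm, hA.inner_Aext_comm hu hu]
  rw [norm_add_sq (𝕜 := ℂ), inner_smul_right, norm_smul]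
  simp [hreal, mul_pow]

lemma abs_mul_norm_le (r : ℝ) {u : ℋ} (hu : u ∈ D) :
    |r| * ‖u‖ ≤ ‖A u + ((r : ℂ) * Complex.I) • u‖ := by
  refine (pow_le_pow_iff_left₀ (by positivity) (norm_nonneg _) two_ne_zero).1 ?_
  rw [hA.norm_Aext_add_I_smul_sq r hu, mul_pow, sq_abs]
  nlinarith [sq_nonneg ‖A u‖]

lemma eq_zero_of_Aext_add_I_smul_eq_zero {r : ℝ} (hr : r ≠ 0) {u : ℋ} (hu : u ∈ D)
    (h : A u + ((r : ℂ) * Complex.I) • u = 0) : u = 0 := by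
  have := hA.abs_mul_norm_le r hu
  rw [h, norm_zero] at this
  exact norm_eq_zero.1 (le_antisymm (nonpos_of_mul_nonpos_right this (abs_pos.2 hr))
    (norm_nonneg u))

end IsSelfAdjointOp

end

section
variable {D : Submodule ℂ ℋ} {Aop : ↥D →ₗ[ℂ] ℋ}

local notation "A" => Aext D Aop
local notation "dom" => domPow D Aop

variable (D Aop) in
lemma commForm_adjoint (X : ℋ →L[ℂ] ℋ) (k : ℕ) (ξ η : ℋ) :
    commForm D Aop (ContinuousLinearMap.adjoint X) k ξ η =
      (-1 : ℂ) ^ k * (starRingEnd ℂ) (commForm D Aop X k η ξ) := by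
  rw [commForm, commForm, map_sum, Finset.mul_sum, ← Finset.sum_range_reflect]
  refine Finset.sum_congr rfl fun j hj => ?_
  have hj : j ≤ k := Nat.le_of_lt_succ (Finset.mem_range.1 hj)
  have hsign : (-1 : ℂ) ^ (k - j) = (-1) ^ k * (-1) ^ j := by
    rw [← pow_add, show k + j = k - j + 2 * j by omega, pow_add, pow_mul]
    simp
  rw [Nat.add_sub_cancel, Nat.sub_sub_self hj, Nat.choose_symm hj, map_mul, map_mul, map_natCast,
    map_pow, map_neg, map_one, inner_conj_symm, ContinuousLinearMap.adjoint_inner_left, hsign]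
  ring

lemma AdExistsN.adjoint {k : ℕ} {X Z : ℋ →L[ℂ] ℋ} (hZ : AdExistsN D Aop k X Z) :
    AdExistsN D Aop k (ContinuousLinearMap.adjoint X)
      ((-1 : ℂ) ^ k • ContinuousLinearMap.adjoint Z) := fun ξ hξ η hη => by
  rw [commForm_adjoint, hZ η hη ξ hξ, inner_conj_symm, smul_apply, inner_smul_left, map_pow,
    map_neg, map_one, ContinuousLinearMap.adjoint_inner_left]

namespace IsSelfAdjointOp

variable (hA : IsSelfAdjointOp D Aop)
include hA

lemma dense_range_add_I_smul {r : ℝ} (hr : r ≠ 0) :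
    Dense (LinearMap.range (Aop + ((r : ℂ) * Complex.I) • D.subtype) : Set ℋ) := by
  rw [Submodule.dense_iff_topologicalClosure_eq_top, Submodule.topologicalClosure_eq_top_iff,
    Submodule.eq_bot_iff]
  intro v hv
  have hAv : ∀ u ∈ D, ⟪A u, v⟫_ℂ = ⟪u, ((r : ℂ) * Complex.I) • v⟫_ℂ := by
    intro u hu
    have horth := (Submodule.mem_orthogonal _ v).1 hv _ (LinearMap.mem_range_self _ ⟨u, hu⟩)
    rw [add_I_smul_subtype_apply, inner_add_left, inner_smul_left] at horth
    rw [inner_smul_right]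
    simp only [map_mul, Complex.conj_ofReal, Complex.conj_I] at horth
    linear_combination horth
  obtain ⟨hvD, hAv⟩ := hA.mem_and_Aext_eq_of_inner hAv
  refine hA.eq_zero_of_Aext_add_I_smul_eq_zero (neg_ne_zero.2 hr) hvD ?_
  rw [hAv, Complex.ofReal_neg, neg_mul, neg_smul, add_neg_cancel]

lemma isClosed_range_add_I_smul {r : ℝ} (hr : r ≠ 0) :
    IsClosed (LinearMap.range (Aop + ((r : ℂ) * Complex.I) • D.subtype) : Set ℋ) := by
  refine isSeqClosed_iff_isClosed.1 fun x y hx hxy => ?_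
  choose u hu using hx
  simp only [add_I_smul_subtype_apply] at hu
  have hcauchy : CauchySeq fun t => (u t : ℋ) := by
    refine Metric.cauchySeq_iff.2 fun ε hε => ?_
    obtain ⟨N, hN⟩ := Metric.cauchySeq_iff.1 hxy.cauchySeq (|r| * ε) (by positivity)
    refine ⟨N, fun s hs t ht => ?_⟩
    have hbound := hA.abs_mul_norm_le r (D.sub_mem (u s).2 (u t).2)
    rw [Aext_sub (u s).2 (u t).2, smul_sub, sub_add_sub_comm, hu, hu, ← dist_eq_norm,
      ← dist_eq_norm] at hbound
    exact lt_of_mul_lt_mul_left (hbound.trans_lt (hN s hs t ht)) (abs_nonneg r)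
  obtain ⟨w, hw⟩ := cauchySeq_tendsto_of_complete hcauchy
  have hAu : Tendsto (fun t => A (u t)) atTop (𝓝 (y - ((r : ℂ) * Complex.I) • w)) := by
    simpa only [← hu, add_sub_cancel_right] using hxy.sub (hw.const_smul ((r : ℂ) * Complex.I))
  obtain ⟨hwD, hAw⟩ := hA.mem_and_Aext_eq_of_tendsto (fun t => (u t).2) hw hAu
  exact ⟨⟨w, hwD⟩, by rw [add_I_smul_subtype_apply, hAw, sub_add_cancel]⟩

lemma bijective_add_I_smul {r : ℝ} (hr : r ≠ 0) :
    Function.Bijective (Aop + ((r : ℂ) * Complex.I) • D.subtype) := by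
  refine ⟨(injective_iff_map_eq_zero _).2 fun u hu => ?_, fun y => ?_⟩
  · rw [add_I_smul_subtype_apply] at hu
    exact Subtype.ext (hA.eq_zero_of_Aext_add_I_smul_eq_zero hr u.2 hu)
  · have hy : y ∈ closure (LinearMap.range (Aop + ((r : ℂ) * Complex.I) • D.subtype) : Set ℋ) :=
      hA.dense_range_add_I_smul hr y
    rwa [(hA.isClosed_range_add_I_smul hr).closure_eq] at hy

noncomputable def resolvent {r : ℝ} (hr : r ≠ 0) : ℋ →ₗ[ℂ] ℋ :=
  D.subtype ∘ₗ (LinearEquiv.ofBijective _ (hA.bijective_add_I_smul hr)).symm.toLinearMap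

noncomputable def approxId (t : ℕ) : ℋ →ₗ[ℂ] ℋ :=
  ((((t : ℝ) + 1 : ℝ) : ℂ) * Complex.I) • hA.resolvent (Nat.cast_add_one_ne_zero t)

variable {r : ℝ} (hr : r ≠ 0)

lemma resolvent_mem (y : ℋ) : hA.resolvent hr y ∈ D := SetLike.coe_mem _

lemma Aext_resolvent_add (y : ℋ) :
    A (hA.resolvent hr y) + ((r : ℂ) * Complex.I) • hA.resolvent hr y = y := by
  rw [resolvent, LinearMap.comp_apply, D.subtype_apply, ← add_I_smul_subtype_apply]
  exact (LinearEquiv.ofBijective _ (hA.bijective_add_I_smul hr)).apply_symm_apply y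

lemma resolvent_Aext_add {u : ℋ} (hu : u ∈ D) :
    hA.resolvent hr (A u + ((r : ℂ) * Complex.I) • u) = u := by
  lift u to D using hu
  rw [← add_I_smul_subtype_apply, resolvent, LinearMap.comp_apply,
    LinearEquiv.coe_toLinearMap, LinearEquiv.ofBijective_symm_apply_apply, D.subtype_apply]

lemma abs_mul_norm_resolvent_le (y : ℋ) : |r| * ‖hA.resolvent hr y‖ ≤ ‖y‖ := by
  simpa only [hA.Aext_resolvent_add hr] using hA.abs_mul_norm_le r (hA.resolvent_mem hr y)

lemma Aext_resolvent {u : ℋ} (hu : u ∈ D) : A (hA.resolvent hr u) = hA.resolvent hr (A u) := by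
  set v := hA.resolvent hr u
  have hv : v ∈ D := hA.resolvent_mem hr u
  have hAv : A v = u - ((r : ℂ) * Complex.I) • v := eq_sub_of_add_eq (hA.Aext_resolvent_add hr u)
  have hAvD : A v ∈ D := hAv ▸ D.sub_mem hu (D.smul_mem _ hv)
  calc A v = hA.resolvent hr (A (A v) + ((r : ℂ) * Complex.I) • A v) :=
        (hA.resolvent_Aext_add hr hAvD).symm
    _ = hA.resolvent hr (A u) := by
        nth_rewrite 1 [hAv]
        rw [Aext_sub hu (D.smul_mem _ hv), Aext_smul _ hv, sub_add_cancel]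

lemma resolvent_mem_domPow {k : ℕ} {y : ℋ} (hy : y ∈ dom k) : hA.resolvent hr y ∈ dom (k + 1) := by
  induction k generalizing y with
  | zero => exact mem_domPow_succ_iff.2 ⟨hA.resolvent_mem hr y, mem_domPow_zero_s14 _⟩
  | succ k ih =>
    obtain ⟨hyD, hAy⟩ := mem_domPow_succ_iff.1 hy
    rw [mem_domPow_succ_iff, hA.Aext_resolvent hr hyD]
    exact ⟨hA.resolvent_mem hr y, ih hAy⟩

lemma approxId_mem_domPow (t : ℕ) {k : ℕ} {y : ℋ} (hy : y ∈ dom k) :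
    hA.approxId t y ∈ dom (k + 1) :=
  smul_mem_domPow _ (hA.resolvent_mem_domPow _ hy)

lemma iterate_approxId_mem_domPow (t p : ℕ) (y : ℋ) : (hA.approxId t)^[p] y ∈ dom p := by
  induction p with
  | zero => exact mem_domPow_zero_s14 y
  | succ p ih =>
    rw [Function.iterate_succ_apply']
    exact hA.approxId_mem_domPow t ih

lemma Aext_iterate_approxId (t p : ℕ) {u : ℋ} (hu : u ∈ D) :
    A ((hA.approxId t)^[p] u) = (hA.approxId t)^[p] (A u) := by
  induction p generalizing u with
  | zero => rfl
  | succ p ih =>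
    have hΦu : hA.approxId t u ∈ D := D.smul_mem _ (hA.resolvent_mem _ u)
    rw [Function.iterate_succ_apply, Function.iterate_succ_apply, ih hΦu, approxId,
      LinearMap.smul_apply, LinearMap.smul_apply, Aext_smul _ (hA.resolvent_mem _ u),
      hA.Aext_resolvent _ hu]

lemma lipschitzWith_approxId (t : ℕ) : LipschitzWith 1 (hA.approxId t) := by
  have hbound : ∀ y, ‖hA.approxId t y‖ ≤ 1 * ‖y‖ := fun y => by
    rw [approxId, LinearMap.smul_apply, norm_smul, norm_mul, Complex.norm_I, mul_one,
      Complex.norm_real, Real.norm_eq_abs, one_mul]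
    exact hA.abs_mul_norm_resolvent_le _ y
  simpa using AddMonoidHomClass.lipschitz_of_bound (hA.approxId t) 1 hbound

lemma norm_approxId_sub_le (t : ℕ) {w : ℋ} (hw : w ∈ D) :
    ‖hA.approxId t w - w‖ ≤ ‖A w‖ / ((t : ℝ) + 1) := by
  have hr : (t : ℝ) + 1 ≠ 0 := Nat.cast_add_one_ne_zero t
  have hsub : hA.approxId t w - w = -A (hA.resolvent hr w) := by
    rw [approxId, LinearMap.smul_apply]
    linear_combination (norm := module) hA.Aext_resolvent_add hr w
  rw [hsub, norm_neg, hA.Aext_resolvent hr hw, le_div_iff₀ (by positivity), mul_comm]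
  simpa [abs_of_pos (by positivity : (0 : ℝ) < t + 1)] using
    hA.abs_mul_norm_resolvent_le hr (A w)

lemma tendsto_approxId (w : ℋ) : Tendsto (fun t => hA.approxId t w) atTop (𝓝 w) := by
  refine tendsto_of_dense_of_lipschitzWith hA.lipschitzWith_approxId hA.1 (fun w hw => ?_) w
  rw [tendsto_iff_norm_sub_tendsto_zero]
  refine squeeze_zero (fun _ => norm_nonneg _) (fun t => hA.norm_approxId_sub_le t hw) ?_
  simpa using (tendsto_add_atTop_iff_nat 1).2 (tendsto_const_div_atTop_nhds_zero_nat ‖A w‖)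

lemma exists_tendsto_domPow (p : ℕ) {u : ℋ} (hu : u ∈ D) :
    ∃ v : ℕ → ℋ, (∀ t, v t ∈ dom p) ∧ Tendsto v atTop (𝓝 u) ∧
      Tendsto (fun t => A (v t)) atTop (𝓝 (A u)) := by
  have hlim := tendsto_iterate_of_lipschitzWith_one hA.lipschitzWith_approxId hA.tendsto_approxId p
  refine ⟨fun t => (hA.approxId t)^[p] u, fun t => hA.iterate_approxId_mem_domPow t p u,
    hlim u, ?_⟩
  simpa only [hA.Aext_iterate_approxId _ p hu] using hlim (A u)

end IsSelfAdjointOp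

namespace AdExistsN

variable (hA : IsSelfAdjointOp D Aop) {j : ℕ} {X Z W : ℋ →L[ℂ] ℋ}
include hA

lemma inner_succ_of_mem (hZ : AdExistsN D Aop j X Z) (hW : AdExistsN D Aop (j + 1) X W)
    {v u : ℋ} (hv : v ∈ dom (j + 1)) (hu : u ∈ D) :
    ⟪W v, u⟫_ℂ = ⟪Z v, A u⟫_ℂ - ⟪Z (A v), u⟫_ℂ := by
  obtain ⟨w, hw, hwu, hAwu⟩ := hA.exists_tendsto_domPow (j + 1) hu
  refine tendsto_nhds_unique (tendsto_const_nhds.inner hwu) ?_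
  simp_rw [hZ.inner_succ hW hv (hw _)]
  exact (tendsto_const_nhds.inner hAwu).sub (tendsto_const_nhds.inner hwu)

lemma apply_mem_and_Aext_apply (hZ : AdExistsN D Aop j X Z)
    (hW : AdExistsN D Aop (j + 1) X W) {u : ℋ} (hu : u ∈ dom (j + 1)) :
    Z u ∈ D ∧ A (Z u) = Z (A u) + W u := by
  refine hA.mem_and_Aext_eq_of_inner fun w hw => ?_
  have hcomm : ⟪Z u, A w⟫_ℂ = ⟪Z (A u) + W u, w⟫_ℂ := by
    rw [inner_add_left, hZ.inner_succ_of_mem hA hW hu hw]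
    ring
  rw [← inner_conj_symm, hcomm, inner_conj_symm]

end AdExistsN

lemma IsSelfAdjointOp.apply_mem_domPow (hA : IsSelfAdjointOp D Aop) {n : ℕ}
    {Y : ℋ →L[ℂ] ℋ} {S : ℕ → ℋ →L[ℂ] ℋ} (hS : ∀ k ≤ n, AdExistsN D Aop k Y (S k))
    {i k : ℕ} (hik : i + k ≤ n) {u : ℋ} (hu : u ∈ dom (i + k)) : S i u ∈ dom k := by
  induction k generalizing i u with
  | zero => exact mem_domPow_zero_s14 _
  | succ k ih =>
    obtain ⟨hmem, hcomm⟩ := (hS i (by omega)).apply_mem_and_Aext_apply hA (hS (i + 1) (by omega))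
      (domPow_antitone (by omega) hu)
    refine mem_domPow_succ_iff.2 ⟨hmem, hcomm ▸ add_mem_domPow ?_ ?_⟩
    · exact ih (by omega) (Aext_mem_domPow (by rwa [← add_assoc] at hu))
    · exact ih (by omega) (domPow_antitone (by omega) hu)

lemma IsSelfAdjointOp.adExistsN_comp (hA : IsSelfAdjointOp D Aop) {n : ℕ}
    {X Y : ℋ →L[ℂ] ℋ} {T S : ℕ → ℋ →L[ℂ] ℋ} (hT : ∀ k ≤ n, AdExistsN D Aop k X (T k))
    (hS : ∀ k ≤ n, AdExistsN D Aop k Y (S k)) {m : ℕ} (hm : m ≤ n) :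
    AdExistsN D Aop m (X.comp Y) (leibnizSum T S m) := by
  induction m with
  | zero =>
    intro ξ _ η _
    rw [inner_leibnizSum_apply, commForm_zero, Finset.sum_range_one, (hT 0 hm).eq_of_zero,
      (hS 0 hm).eq_of_zero]
    simp
  | succ m ih =>
    intro ξ hξ η hη
    have hmn : m ≤ n := by omega
    rw [commForm_succ, ih hmn ξ (domPow_antitone (by omega) hξ) (A η) (Aext_mem_domPow hη),
      ih hmn (A ξ) (Aext_mem_domPow hξ) η (domPow_antitone (by omega) hη),
      inner_leibnizSum_apply, inner_leibnizSum_apply, inner_leibnizSum_apply,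
      sum_range_choose_succ_mul, ← Finset.sum_add_distrib, ← Finset.sum_sub_distrib]
    refine Finset.sum_congr rfl fun j hj => ?_
    have hjm : j ≤ m := Nat.le_of_lt_succ (Finset.mem_range.1 hj)
    have hSξ : S (m - j) ξ ∈ dom (j + 1) :=
      hA.apply_mem_domPow hS (by omega) (domPow_antitone (by omega) hξ)
    have hTstep := (hT j (by omega)).inner_succ (hT (j + 1) (by omega)) hSξ
      (domPow_antitone (by omega) hη)
    have hSstep := ((hS (m - j) (by omega)).apply_mem_and_Aext_apply hA
      (hS (m - j + 1) (by omega)) (domPow_antitone (by omega) hξ)).2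
    rw [hSstep, map_add, inner_add_left] at hTstep
    rw [show m + 1 - j = m - j + 1 by omega, show m + 1 - (j + 1) = m - j by omega]
    linear_combination -(m.choose j : ℂ) * hTstep

end

/-- `C_n(A)` is a *-subalgebra of `B(ℋ)`: it is a linear subspace and is
closed under adjoints and products. -/
theorem stmt_14 {ℋ : Type*} [NormedAddCommGroup ℋ] [InnerProductSpace ℂ ℋ] [CompleteSpace ℋ]
    (D : Submodule ℂ ℋ) (Aop : ↥D →ₗ[ℂ] ℋ) (hA : IsSelfAdjointOp D Aop) (n : ℕ) :
    (∀ X Y : ℋ →L[ℂ] ℋ, InCn D Aop n X → InCn D Aop n Y → InCn D Aop n (X + Y)) ∧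
      (∀ (c : ℂ) (X : ℋ →L[ℂ] ℋ), InCn D Aop n X → InCn D Aop n (c • X)) ∧
      (∀ X : ℋ →L[ℂ] ℋ, InCn D Aop n X → InCn D Aop n (ContinuousLinearMap.adjoint X)) ∧
      ∀ X Y : ℋ →L[ℂ] ℋ, InCn D Aop n X → InCn D Aop n Y → InCn D Aop n (X.comp Y) := by
  refine ⟨fun X Y hX hY k hk => ?_, fun c X hX k hk => ?_, fun X hX k hk => ?_,
    fun X Y hX hY => ?_⟩
  · obtain ⟨Z, hZ⟩ := hX k hk
    obtain ⟨W, hW⟩ := hY k hk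
    exact ⟨Z + W, hZ.add hW⟩
  · obtain ⟨Z, hZ⟩ := hX k hk
    exact ⟨c • Z, hZ.smul c⟩
  · obtain ⟨Z, hZ⟩ := hX k hk
    exact ⟨_, hZ.adjoint⟩
  · choose! T hT using hX
    choose! S hS using hY
    exact fun m hm => ⟨leibnizSum T S m, hA.adExistsN_comp hT hS hm⟩
end
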